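/- arXiv:1103.6213 — 8 statements merged into one kernel-verified Lean document; each statement's English description precedes it below -/
import Mathlib

section
/- Let V be a Hermitian space of dimension d₀ and fix k with 0 ≤ k ≤ d₀ − 1. Let f : ℝ → ℝ≥0 be f(x) = max(x,0). Then the map λ_k : s(V) → s_+(V) given by λ_k(α) := f(α − e_{d₀−k−1}(α)·id) is well defined (its values are positive semidefinite) and continuous; here f(α − e_{d₀−k−1}(α)·id) denotes the self-adjoint operator with the same eigenvectors as α and with eigenvalues max(e_j(α) − e_{d₀−k−1}(α), 0) for 0 ≤ j ≤ d₀−1 (functional calculus applied to f). -/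
open Finset
open scoped InnerProductSpace ComplexConjugate

namespace Miller4

variable {V : Type*} [NormedAddCommGroup V] [InnerProductSpace ℂ V] [FiniteDimensional ℂ V]

noncomputable def diagLM {n : ℕ} (v : OrthonormalBasis (Fin n) ℂ V) (s : Fin n → ℝ) :
    V →ₗ[ℂ] V where
  toFun x := ∑ i, (s i : ℂ) • (⟪v i, x⟫_ℂ • v i)
  map_add' x y := by
    simp [inner_add_right, add_smul, smul_add, Finset.sum_add_distrib]
  map_smul' c x := by
    simp only [inner_smul_right, RingHom.id_apply, Finset.smul_sum, smul_smul]
    congr 1; ext i; ring_nf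

noncomputable def diagOp {n : ℕ} (v : OrthonormalBasis (Fin n) ℂ V) (s : Fin n → ℝ) :
    V →L[ℂ] V :=
  LinearMap.mkContinuous (diagLM v s) (∑ i, |s i|) (fun x => by
    calc ‖∑ i, (s i : ℂ) • (⟪v i, x⟫_ℂ • v i)‖ ≤ ∑ i, ‖(s i : ℂ) • (⟪v i, x⟫_ℂ • v i)‖ :=
          norm_sum_le _ _
    _ ≤ ∑ i, |s i| * ‖x‖ := by
        refine Finset.sum_le_sum fun i _ => ?_
        rw [norm_smul, norm_smul]
        have h1 : ‖⟪v i, x⟫_ℂ‖ ≤ ‖v i‖ * ‖x‖ := norm_inner_le_norm _ _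
        have h2 : ‖v i‖ = 1 := v.orthonormal.1 i
        rw [h2, one_mul] at h1
        calc ‖(s i : ℂ)‖ * (‖⟪v i, x⟫_ℂ‖ * ‖v i‖) = |s i| * ‖⟪v i, x⟫_ℂ‖ := by
              rw [h2, Complex.norm_real, Real.norm_eq_abs, mul_one]
        _ ≤ |s i| * ‖x‖ := by
              exact mul_le_mul_of_nonneg_left h1 (abs_nonneg _)
    _ = (∑ i, |s i|) * ‖x‖ := by rw [Finset.sum_mul])

lemma diagOp_apply {n : ℕ} (v : OrthonormalBasis (Fin n) ℂ V) (s : Fin n → ℝ) (x : V) :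
    diagOp v s x = ∑ i, (s i : ℂ) • (⟪v i, x⟫_ℂ • v i) := rfl

lemma diagOp_norm_le {n : ℕ} (v : OrthonormalBasis (Fin n) ℂ V) (s : Fin n → ℝ) :
    ‖diagOp v s‖ ≤ ∑ i, |s i| :=
  LinearMap.mkContinuous_norm_le _ (Finset.sum_nonneg fun i _ => abs_nonneg _) _

lemma diagOp_selfAdjoint {n : ℕ} (v : OrthonormalBasis (Fin n) ℂ V) (s : Fin n → ℝ) :
    IsSelfAdjoint (diagOp v s) := by
  rw [ContinuousLinearMap.isSelfAdjoint_iff_isSymmetric]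
  intro x y
  simp only [ContinuousLinearMap.coe_coe, diagOp_apply, sum_inner, inner_sum,
    inner_smul_left, inner_smul_right, Complex.conj_ofReal, map_mul, ← inner_conj_symm x (v _)]
  congr 1; ext i; ring

lemma diagOp_apply_basis {n : ℕ} (v : OrthonormalBasis (Fin n) ℂ V) (s : Fin n → ℝ)
    (j : Fin n) : diagOp v s (v j) = (s j : ℂ) • v j := by
  classical
  rw [diagOp_apply]
  rw [Finset.sum_eq_single j]
  · rw [orthonormal_iff_ite.mp v.orthonormal, if_pos rfl]; simp
  · intro i _ hij
    rw [orthonormal_iff_ite.mp v.orthonormal, if_neg hij]; simp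
  · simp

lemma diagOp_pos {n : ℕ} (v : OrthonormalBasis (Fin n) ℂ V) (s : Fin n → ℝ)
    (hs : ∀ i, 0 ≤ s i) : (diagOp v s).IsPositive := by
  refine ⟨ContinuousLinearMap.isSelfAdjoint_iff_isSymmetric.mp (diagOp_selfAdjoint v s), fun x => ?_⟩
  have key : ⟪diagOp v s x, x⟫_ℂ = ∑ i, ((s i * Complex.normSq ⟪v i, x⟫_ℂ : ℝ) : ℂ) := by
    rw [diagOp_apply, sum_inner]
    congr 1; ext i
    rw [inner_smul_left, inner_smul_left, Complex.conj_ofReal,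
      mul_comm ((starRingEnd ℂ) ⟪v i, x⟫_ℂ) (⟪v i, x⟫_ℂ), Complex.mul_conj]
    push_cast; ring
  have : ContinuousLinearMap.reApplyInnerSelf (diagOp v s) x =
      ∑ i, s i * Complex.normSq ⟪v i, x⟫_ℂ := by
    rw [ContinuousLinearMap.reApplyInnerSelf_apply]
    rw [show ⟪(diagOp v s) x, x⟫_ℂ = _ from key]
    rw [map_sum]
    simp [Complex.ofReal_re]
  rw [this]
  exact Finset.sum_nonneg fun i _ => mul_nonneg (hs i) (Complex.normSq_nonneg _)


lemma eigen_orth {α : V →L[ℂ] V} (hα : IsSelfAdjoint α) {x w : V} {a b : ℝ}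
    (hx : α x = (a : ℂ) • x) (hw : α w = (b : ℂ) • w) (h : ⟪x, w⟫_ℂ ≠ 0) : a = b := by
  have hsym := (ContinuousLinearMap.isSelfAdjoint_iff_isSymmetric.mp hα) x w
  simp only [ContinuousLinearMap.coe_coe] at hsym
  rw [hx, hw, inner_smul_left, inner_smul_right, Complex.conj_ofReal] at hsym
  have : ((a : ℂ) - b) * ⟪x, w⟫_ℂ = 0 := by ring_nf; rw [mul_comm] at hsym ⊢; linear_combination hsym
  rcases mul_eq_zero.mp this with h1 | h1
  · have h2 : (a : ℂ) = b := sub_eq_zero.mp h1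
    exact_mod_cast h2
  · exact absurd h1 h

lemma diagOp_eigen {n : ℕ} (v : OrthonormalBasis (Fin n) ℂ V) (s : Fin n → ℝ) (w : V) (r : ℝ)
    (h : ∀ i, ⟪v i, w⟫_ℂ ≠ 0 → s i = r) : diagOp v s w = (r : ℂ) • w := by
  conv_rhs => rw [← v.sum_repr' w]
  rw [diagOp_apply, Finset.smul_sum]
  congr 1; ext i
  by_cases hc : ⟪v i, w⟫_ℂ = 0
  · simp [hc]
  · rw [h i hc]

lemma diag_eval {α : V →L[ℂ] V} (hα : IsSelfAdjoint α) {n : ℕ} {t : Fin n → ℝ}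
    {v : OrthonormalBasis (Fin n) ℂ V} (hv : ∀ i, α (v i) = (t i : ℂ) • v i)
    (g : ℝ → ℝ) {w : V} {r : ℝ} (hw : α w = (r : ℂ) • w) :
    diagOp v (fun i => g (t i)) w = ((g r : ℝ) : ℂ) • w :=
  diagOp_eigen v _ w (g r) fun i hi => by rw [eigen_orth hα (hv i) hw hi]


lemma fiber_span {α : V →L[ℂ] V} (hα : IsSelfAdjoint α) {n : ℕ} {t : Fin n → ℝ}
    {v : OrthonormalBasis (Fin n) ℂ V} (hv : ∀ i, α (v i) = (t i : ℂ) • v i) (r : ℝ) :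
    (Submodule.span ℂ (Set.range (fun i : {i : Fin n // t i = r} => v i)) : Submodule ℂ V)
      = Module.End.eigenspace (↑α : V →ₗ[ℂ] V) (r : ℂ) := by
  apply le_antisymm
  · rw [Submodule.span_le]
    rintro _ ⟨⟨i, hi⟩, rfl⟩
    rw [SetLike.mem_coe, Module.End.mem_eigenspace_iff]
    simpa [hi] using hv i
  · intro w hw
    rw [Module.End.mem_eigenspace_iff] at hw
    have hw' : α w = (r : ℂ) • w := hw
    rw [← v.sum_repr' w]
    refine Submodule.sum_mem _ fun i _ => ?_
    by_cases hc : ⟪v i, w⟫_ℂ = 0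
    · simp [hc]
    · have hti : t i = r := eigen_orth hα (hv i) hw' hc
      exact Submodule.smul_mem _ _ (Submodule.subset_span ⟨⟨i, hti⟩, rfl⟩)

lemma fiber_card {α : V →L[ℂ] V} (hα : IsSelfAdjoint α) {n : ℕ} {t : Fin n → ℝ}
    {v : OrthonormalBasis (Fin n) ℂ V} (hv : ∀ i, α (v i) = (t i : ℂ) • v i) (r : ℝ) :
    Fintype.card {i : Fin n // t i = r} =
      Module.finrank ℂ (Module.End.eigenspace (↑α : V →ₗ[ℂ] V) (r : ℂ)) := by
  classical
  rw [← fiber_span hα hv r]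
  have hli : LinearIndependent ℂ (fun i : {i : Fin n // t i = r} => v i) :=
    (v.orthonormal.comp _ Subtype.val_injective).linearIndependent
  exact (finrank_span_eq_card hli).symm

lemma monotone_eq_of_fiber_card {n : ℕ} {t t' : Fin n → ℝ} (ht : Monotone t) (ht' : Monotone t')
    (h : ∀ r : ℝ, Fintype.card {i : Fin n // t i = r} = Fintype.card {i : Fin n // t' i = r}) :
    t = t' := by
  classical
  have hcount : ∀ (f : Fin n → ℝ) (r : ℝ),
      Multiset.count r (Multiset.map f Finset.univ.val) = Fintype.card {i : Fin n // f i = r} := by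
    intro f r
    rw [Multiset.count_map]
    rw [Fintype.card_subtype]
    rw [show (Finset.filter (fun i => f i = r) Finset.univ).card
        = Multiset.card (Multiset.filter (fun i => f i = r) Finset.univ.val) from rfl]
    congr 1
    apply Multiset.filter_congr
    intro i _
    exact eq_comm
  have hms : Multiset.map t Finset.univ.val = Multiset.map t' Finset.univ.val := by
    ext r
    rw [hcount t r, hcount t' r, h r]
  rw [Fin.univ_val_map, Fin.univ_val_map] at hms
  have hperm : List.Perm (List.ofFn t) (List.ofFn t') := Multiset.coe_eq_coe.mp hms
  have heq : List.ofFn t = List.ofFn t' :=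
    List.Perm.eq_of_sortedLE ht.sortedLE_ofFn ht'.sortedLE_ofFn hperm
  exact funext fun i => by
    have := List.ofFn_inj.mp heq
    exact congrFun this i

lemma sorted_eigen_unique {α : V →L[ℂ] V} (hα : IsSelfAdjoint α) {n : ℕ}
    {t t' : Fin n → ℝ} {v v' : OrthonormalBasis (Fin n) ℂ V}
    (ht : Monotone t) (ht' : Monotone t')
    (hv : ∀ i, α (v i) = (t i : ℂ) • v i) (hv' : ∀ i, α (v' i) = (t' i : ℂ) • v' i) :
    t = t' :=
  monotone_eq_of_fiber_card ht ht' fun r => by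
    rw [fiber_card hα hv r, fiber_card hα hv' r]


lemma clm_ext_basis {n : ℕ} (v : OrthonormalBasis (Fin n) ℂ V) {A B : V →L[ℂ] V}
    (h : ∀ i, A (v i) = B (v i)) : A = B := by
  apply ContinuousLinearMap.coe_injective
  apply Module.Basis.ext v.toBasis
  intro i
  simpa using h i

lemma eigen_abs_le {α : V →L[ℂ] V} {n : ℕ} {t : Fin n → ℝ}
    {v : OrthonormalBasis (Fin n) ℂ V}
    (hv : ∀ i, α (v i) = (t i : ℂ) • v i) (i : Fin n) : |t i| ≤ ‖α‖ := by
  have h1 : ‖α (v i)‖ ≤ ‖α‖ * ‖v i‖ := α.le_opNorm _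
  rw [hv i, norm_smul, Complex.norm_real, Real.norm_eq_abs, v.orthonormal.1 i, mul_one,
    mul_one] at h1
  exact h1

lemma exists_eigendata {n : ℕ} (hn : Module.finrank ℂ V = n) (α : V →L[ℂ] V)
    (hα : IsSelfAdjoint α) :
    ∃ t : Fin n → ℝ, ∃ v : OrthonormalBasis (Fin n) ℂ V,
      Monotone t ∧ ∀ i, α (v i) = (t i : ℂ) • v i := by
  have hsym : (↑α : V →ₗ[ℂ] V).IsSymmetric :=
    ContinuousLinearMap.isSelfAdjoint_iff_isSymmetric.mp hα
  let e := hsym.eigenvalues hn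
  let σ := Tuple.sort e
  refine ⟨e ∘ σ, (hsym.eigenvectorBasis hn).reindex σ.symm, Tuple.monotone_sort e, fun i => ?_⟩
  have h1 : (hsym.eigenvectorBasis hn).reindex σ.symm i = hsym.eigenvectorBasis hn (σ i) := by
    rw [OrthonormalBasis.reindex_apply]; simp
  rw [h1]
  have h2 := hsym.apply_eigenvectorBasis hn (σ i)
  exact h2

end Miller4

open Filter Topology



/-- Let `V` be a Hermitian space of dimension `d₀` and fix `k` with
`0 ≤ k ≤ d₀ − 1`.  Then there is exactly one map `λₖ : s(V) → s(V)` which is the functional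
calculus for `x ↦ max(x − e_{d₀−k−1}(α), 0)`:  whenever `v` is an orthonormal basis of
eigenvectors of a self-adjoint `α` with eigenvalues `t 0 ≤ … ≤ t (d₀−1)` (listed in
increasing order), `λₖ α` has the same eigenvectors `v i` with eigenvalues
`max (t i − t (d₀−k−1)) 0`.  Moreover this map is well defined into `s₊(V)` (its values
are positive semidefinite) and continuous. -/
theorem miller_stmt4 {V : Type*} [NormedAddCommGroup V] [InnerProductSpace ℂ V]
    [FiniteDimensional ℂ V] (d₀ k : ℕ) (hd : Module.finrank ℂ V = d₀) (hk : k < d₀) :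
    ∃! Λ : {α : V →L[ℂ] V // IsSelfAdjoint α} → {α : V →L[ℂ] V // IsSelfAdjoint α},
      (∀ α, (Λ α : V →L[ℂ] V).IsPositive) ∧
      Continuous Λ ∧
      ∀ (α : {α : V →L[ℂ] V // IsSelfAdjoint α}) (t : Fin d₀ → ℝ) (_ : Monotone t)
        (v : OrthonormalBasis (Fin d₀) ℂ V),
        (∀ i, (α : V →L[ℂ] V) (v i) = (t i : ℂ) • v i) →
        ∀ i, (Λ α : V →L[ℂ] V) (v i) =
          ((max (t i - t ⟨d₀ - k - 1, by omega⟩) 0 : ℝ) : ℂ) • v i := by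
  classical
  haveI : NeZero d₀ := ⟨by omega⟩
  haveI : Nonempty (Fin d₀) := ⟨⟨0, by omega⟩⟩
  set S := {α : V →L[ℂ] V // IsSelfAdjoint α} with hS
  set c : Fin d₀ := ⟨d₀ - k - 1, by omega⟩ with hcdef
  obtain ⟨T, B, hmono, heig⟩ :
      ∃ (T : S → Fin d₀ → ℝ) (B : S → OrthonormalBasis (Fin d₀) ℂ V),
        (∀ α, Monotone (T α)) ∧ ∀ (α : S) i, (α : V →L[ℂ] V) (B α i) = (T α i : ℂ) • B α i := by
    choose T B h1 h2 using fun α : S => Miller4.exists_eigendata hd α.1 α.2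
    exact ⟨T, B, h1, h2⟩
  let g : S → V →L[ℂ] V := fun α => Miller4.diagOp (B α) (fun i => max (T α i - T α c) 0)
  let Λ : S → S := fun α => ⟨g α, Miller4.diagOp_selfAdjoint _ _⟩
  have hchar : ∀ (α : S) (t : Fin d₀ → ℝ), Monotone t →
      ∀ v : OrthonormalBasis (Fin d₀) ℂ V,
      (∀ i, (α : V →L[ℂ] V) (v i) = (t i : ℂ) • v i) →
      ∀ i, g α (v i) = ((max (t i - t c) 0 : ℝ) : ℂ) • v i := by
    intro α t ht v hv i
    have hTt : T α = t := Miller4.sorted_eigen_unique α.2 (hmono α) ht (heig α) hv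
    have h1 : g α (v i) = ((max (t i - T α c) 0 : ℝ) : ℂ) • v i :=
      Miller4.diag_eval α.2 (heig α) (fun x => max (x - T α c) 0) (hv i)
    rw [hTt] at h1
    exact h1
  have hgcont : Continuous g := by
    rw [continuous_iff_seqContinuous]
    intro u α hu
    apply Filter.tendsto_of_subseq_tendsto
    intro ns hns
    haveI : ProperSpace V := FiniteDimensional.proper ℂ V
    haveI : ProperSpace (V →L[ℂ] V) := FiniteDimensional.proper ℂ (V →L[ℂ] V)
    set w : ℕ → S := u ∘ ns with hwdef
    have hwt : Tendsto w atTop (𝓝 α) := hu.comp hns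
    have hvalt : Tendsto (fun m => ((w m : V →L[ℂ] V))) atTop (𝓝 (α : V →L[ℂ] V)) :=
      (continuous_subtype_val.tendsto α).comp hwt
    obtain ⟨C, hC⟩ := (hvalt.norm).bddAbove_range
    have hCle : ∀ m, ‖(w m : V →L[ℂ] V)‖ ≤ C := fun m => hC ⟨m, rfl⟩
    let q : ℕ → (Fin d₀ → ℝ) × (Fin d₀ → V) := fun m => (T (w m), fun i => B (w m) i)
    have hqK : ∀ m, q m ∈ (Set.univ.pi fun _ : Fin d₀ => Set.Icc (-C) C) ×ˢ
        (Set.univ.pi fun _ : Fin d₀ => Metric.sphere (0 : V) 1) := by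
      intro m
      constructor
      · intro i _
        have h1 := Miller4.eigen_abs_le (heig (w m)) i
        have h2 := abs_le.mp (h1.trans (hCle m))
        exact ⟨h2.1, h2.2⟩
      · intro i _
        rw [mem_sphere_zero_iff_norm]
        exact (B (w m)).orthonormal.1 i
    have hK : IsCompact ((Set.univ.pi fun _ : Fin d₀ => Set.Icc (-C) C) ×ˢ
        (Set.univ.pi fun _ : Fin d₀ => Metric.sphere (0 : V) 1)) :=
      (isCompact_univ_pi fun _ => isCompact_Icc).prod
        (isCompact_univ_pi fun _ => isCompact_sphere 0 1)
    obtain ⟨⟨tl, vl⟩, -, φ, hφ, hφt⟩ := hK.tendsto_subseq hqK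
    have htlim : ∀ i, Tendsto (fun m => T (w (φ m)) i) atTop (𝓝 (tl i)) := by
      intro i
      have h1 : Tendsto (fun m => (q (φ m)).1) atTop (𝓝 tl) :=
        (continuous_fst.tendsto _).comp hφt
      exact tendsto_pi_nhds.mp h1 i
    have hvlim : ∀ i, Tendsto (fun m => B (w (φ m)) i) atTop (𝓝 (vl i)) := by
      intro i
      have h1 : Tendsto (fun m => (q (φ m)).2) atTop (𝓝 vl) :=
        (continuous_snd.tendsto _).comp hφt
      exact tendsto_pi_nhds.mp h1 i
    have hgmem : ∀ m, g (w (φ m)) ∈ Metric.closedBall (0 : V →L[ℂ] V) ((d₀ : ℝ) * (2 * C)) := by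
      intro m
      rw [Metric.mem_closedBall, dist_zero_right]
      refine le_trans (Miller4.diagOp_norm_le _ _) ?_
      have hbd : ∀ i : Fin d₀, |max (T (w (φ m)) i - T (w (φ m)) c) 0| ≤ 2 * C := by
        intro i
        have h1 := Miller4.eigen_abs_le (heig (w (φ m))) i
        have h2 := Miller4.eigen_abs_le (heig (w (φ m))) c
        have hC0 : (0 : ℝ) ≤ C := le_trans (norm_nonneg _) (hCle 0)
        have h4 : |T (w (φ m)) i - T (w (φ m)) c| ≤ 2 * C := by
          calc |T (w (φ m)) i - T (w (φ m)) c|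
              ≤ |T (w (φ m)) i| + |T (w (φ m)) c| := abs_sub _ _
            _ ≤ C + C := add_le_add (h1.trans (hCle (φ m))) (h2.trans (hCle (φ m)))
            _ = 2 * C := by ring
        rw [abs_of_nonneg (le_max_right _ _)]
        exact max_le ((le_abs_self _).trans h4) (by linarith)
      calc ∑ i, |max (T (w (φ m)) i - T (w (φ m)) c) 0|
          ≤ ∑ _i : Fin d₀, 2 * C := Finset.sum_le_sum fun i _ => hbd i
        _ = (d₀ : ℝ) * (2 * C) := by
            rw [Finset.sum_const, Finset.card_univ, Fintype.card_fin, nsmul_eq_mul]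
    obtain ⟨β, -, ψ, hψ, hψt⟩ :=
      (isCompact_closedBall (0 : V →L[ℂ] V) _).tendsto_subseq hgmem
    set A : ℕ → S := fun m => w (φ (ψ m)) with hAdef
    have hAval : Tendsto (fun m => ((A m : V →L[ℂ] V))) atTop (𝓝 (α : V →L[ℂ] V)) :=
      hvalt.comp ((hφ.comp hψ).tendsto_atTop)
    have ht2 : ∀ i, Tendsto (fun m => T (A m) i) atTop (𝓝 (tl i)) :=
      fun i => (htlim i).comp hψ.tendsto_atTop
    have hv2 : ∀ i, Tendsto (fun m => B (A m) i) atTop (𝓝 (vl i)) :=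
      fun i => (hvlim i).comp hψ.tendsto_atTop
    have hβ : Tendsto (fun m => g (A m)) atTop (𝓝 β) := hψt
    have hvl : Orthonormal ℂ vl := by
      rw [orthonormal_iff_ite]
      intro i j
      have h1 : Tendsto (fun m => ⟪B (A m) i, B (A m) j⟫_ℂ) atTop (𝓝 ⟪vl i, vl j⟫_ℂ) :=
        Filter.Tendsto.inner (hv2 i) (hv2 j)
      have h2 : (fun m => ⟪B (A m) i, B (A m) j⟫_ℂ) = fun _ => if i = j then (1 : ℂ) else 0 :=
        funext fun m => orthonormal_iff_ite.mp (B (A m)).orthonormal i j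
      rw [h2] at h1
      exact tendsto_nhds_unique h1 tendsto_const_nhds
    have hcard : Fintype.card (Fin d₀) = Module.finrank ℂ V := by simp [hd]
    let vb : OrthonormalBasis (Fin d₀) ℂ V :=
      OrthonormalBasis.mk hvl
        (hvl.linearIndependent.span_eq_top_of_card_eq_finrank hcard).ge
    have hvb : (vb : Fin d₀ → V) = vl := OrthonormalBasis.coe_mk _ _
    have htl : Monotone tl := fun i j hij =>
      le_of_tendsto_of_tendsto' (ht2 i) (ht2 j) fun m => hmono (A m) hij
    have happly : ∀ i, (α : V →L[ℂ] V) (vb i) = (tl i : ℂ) • vb i := by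
      intro i
      have hb : Tendsto (fun m => (((A m : V →L[ℂ] V)), B (A m) i)) atTop
          (𝓝 ((α : V →L[ℂ] V), vl i)) := hAval.prodMk_nhds (hv2 i)
      have h1 : Tendsto (fun m => (A m : V →L[ℂ] V) (B (A m) i)) atTop
          (𝓝 ((α : V →L[ℂ] V) (vl i))) :=
        ((isBoundedBilinearMap_apply (𝕜 := ℂ)).continuous.tendsto _).comp hb
      have h2 : Tendsto (fun m => ((T (A m) i : ℂ)) • B (A m) i) atTop
          (𝓝 ((tl i : ℂ) • vl i)) :=
        ((Complex.continuous_ofReal.tendsto _).comp (ht2 i)).smul (hv2 i)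
      have h3 : (fun m => (A m : V →L[ℂ] V) (B (A m) i))
          = fun m => ((T (A m) i : ℂ)) • B (A m) i := funext fun m => heig (A m) i
      rw [h3] at h1
      rw [show vb i = vl i from congrFun hvb i]
      exact tendsto_nhds_unique h1 h2
    have hβact : ∀ i, β (vl i) = ((max (tl i - tl c) 0 : ℝ) : ℂ) • vl i := by
      intro i
      have h1 : Tendsto (fun m => g (A m) (B (A m) i)) atTop (𝓝 (β (vl i))) :=
        ((isBoundedBilinearMap_apply (𝕜 := ℂ)).continuous.tendsto _).comp
          (hβ.prodMk_nhds (hv2 i))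
      have h2 : (fun m => g (A m) (B (A m) i))
          = fun m => ((max (T (A m) i - T (A m) c) 0 : ℝ) : ℂ) • B (A m) i :=
        funext fun m => Miller4.diagOp_apply_basis _ _ i
      have h3 : Tendsto (fun m => ((max (T (A m) i - T (A m) c) 0 : ℝ) : ℂ) • B (A m) i)
          atTop (𝓝 (((max (tl i - tl c) 0 : ℝ) : ℂ) • vl i)) := by
        refine Tendsto.smul ?_ (hv2 i)
        exact (Complex.continuous_ofReal.tendsto _).comp
          (((ht2 i).sub (ht2 c)).max tendsto_const_nhds)
      rw [h2] at h1
      exact tendsto_nhds_unique h1 h3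
    have hβeq : β = g α := by
      apply Miller4.clm_ext_basis vb
      intro i
      rw [hchar α tl htl vb happly i]
      rw [show vb i = vl i from congrFun hvb i]
      exact hβact i
    refine ⟨φ ∘ ψ, ?_⟩
    rw [← hβeq]
    exact hβ
  have hΛcont : Continuous Λ := hgcont.subtype_mk _
  refine ⟨Λ, ⟨fun α => Miller4.diagOp_pos _ _ fun i => le_max_right _ _, hΛcont,
    fun α t ht v hv i => hchar α t ht v hv i⟩, ?_⟩
  intro Λ' ⟨_, _, hchar'⟩
  funext α
  apply Subtype.ext
  apply Miller4.clm_ext_basis (B α)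
  intro i
  rw [hchar' α (T α) (hmono α) (B α) (heig α) i]
  rw [hchar α (T α) (hmono α) (B α) (heig α) i]
end

section
/- Let V and W be Hermitian spaces with dim V ≤ dim W. The map κ' : s(V) × 𝓛(V,W) → inj(V,W) given by κ'(α,θ) := −θ ∘ Exp(α) is a homeomorphism, with continuous inverse given by γ ↦ (log(ρ(γ)), −σ(γ)). -/
set_option maxHeartbeats 1000000
set_option synthInstance.maxHeartbeats 400000

open NormedSpace ContinuousLinearMap Filter Topology

namespace Miller5Aux

variable {V W : Type*} [NormedAddCommGroup V] [InnerProductSpace ℂ V]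
    [FiniteDimensional ℂ V] [NormedAddCommGroup W] [InnerProductSpace ℂ W]
    [FiniteDimensional ℂ W]

local notation "⟪" x ", " y "⟫" => @inner ℂ _ _ x y

noncomputable instance ratNormedAlgebraCLM : NormedAlgebra ℚ (V →L[ℂ] V) :=
  NormedAlgebra.restrictScalars ℚ ℂ (V →L[ℂ] V)


lemma adj_comp_self (θ : V →L[ℂ] W) (hθ : ∀ v, ‖θ v‖ = ‖v‖) :
    adjoint θ ∘L θ = 1 := by
  ext v
  refine ext_inner_right ℂ fun w => ?_
  rw [ContinuousLinearMap.comp_apply, adjoint_inner_left, ContinuousLinearMap.one_apply]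
  exact (⟨(θ : V →ₗ[ℂ] W), hθ⟩ : V →ₗᵢ[ℂ] W).inner_map_map v w

lemma isUnit_of_injective (f : V →L[ℂ] V) (hf : Function.Injective f) :
    IsUnit f := by
  have hb : Function.Bijective (f : V →ₗ[ℂ] V) :=
    ⟨hf, LinearMap.injective_iff_surjective.mp hf⟩
  let e := (LinearEquiv.ofBijective (f : V →ₗ[ℂ] V) hb).toContinuousLinearEquiv
  have he : ∀ x, e x = f x := fun x => rfl
  refine ⟨⟨f, (e.symm : V →L[ℂ] V), ?_, ?_⟩, rfl⟩
  · ext v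
    show f (e.symm v) = v
    rw [← he]; exact e.apply_symm_apply v
  · ext v
    show e.symm (f v) = v
    rw [← he]; exact e.symm_apply_apply v

lemma isSelfAdjoint_adj_comp (γ : V →L[ℂ] W) : IsSelfAdjoint (adjoint γ ∘L γ) := by
  rw [isSelfAdjoint_iff, star_eq_adjoint, adjoint_comp, adjoint_adjoint]

lemma nonneg_adj_comp (γ : V →L[ℂ] W) : (0 : V →L[ℂ] V) ≤ adjoint γ ∘L γ := by
  rw [nonneg_iff_isPositive]
  refine ⟨isSelfAdjoint_iff_isSymmetric.mp (isSelfAdjoint_adj_comp γ), fun v => ?_⟩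
  rw [reApplyInnerSelf_apply, ContinuousLinearMap.comp_apply, adjoint_inner_left]
  exact inner_self_nonneg

lemma spectrum_pos (γ : V →L[ℂ] W) (hγ : Function.Injective γ) :
    ∀ x ∈ spectrum ℝ (adjoint γ ∘L γ), 0 < x := by
  intro x hx
  rcases (spectrum_nonneg_of_nonneg (nonneg_adj_comp γ) hx).lt_or_eq with h | h
  · exact h
  exfalso
  have hker : ∀ v, (adjoint γ ∘L γ) v = 0 → v = 0 := by
    intro v hv
    have h2 : (⟪γ v, γ v⟫ : ℂ) = 0 := by
      rw [← adjoint_inner_left]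
      show (⟪(adjoint γ ∘L γ) v, v⟫ : ℂ) = 0
      rw [hv, inner_zero_left]
    exact hγ (by simpa using inner_self_eq_zero.mp h2)
  have hinj : Function.Injective (adjoint γ ∘L γ) := by
    intro v w hvw
    have := hker (v - w) (by rw [map_sub, hvw, sub_self])
    exact sub_eq_zero.mp this
  exact (spectrum.zero_mem_iff ℝ).mp (h ▸ hx) (isUnit_of_injective _ hinj)

lemma exists_lower {a : V →L[ℂ] V} (h : ∀ x ∈ spectrum ℝ a, 0 < x) :
    ∃ m : ℝ, 0 < m ∧ ∀ x ∈ spectrum ℝ a, m ≤ x := by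
  rcases (spectrum ℝ a).eq_empty_or_nonempty with hS | hS
  · exact ⟨1, one_pos, by simp [hS]⟩
  · have hc : IsCompact (spectrum ℝ a) := spectrum.isCompact a
    exact ⟨sInf (spectrum ℝ a), h _ (hc.sInf_mem hS),
      fun x hx => csInf_le hc.bddBelow hx⟩

lemma norm_log_le {a : V →L[ℂ] V} {m M : ℝ} (hm : 0 < m)
    (h : ∀ x ∈ spectrum ℝ a, m ≤ x ∧ x ≤ M) :
    ‖CFC.log a‖ ≤ max |Real.log m| |Real.log M| := by
  refine norm_cfc_le (le_max_iff.mpr (Or.inl (abs_nonneg _))) fun x hx => ?_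
  obtain ⟨h1, h2⟩ := h x hx
  rw [Real.norm_eq_abs]
  exact abs_le_max_abs_abs (Real.log_le_log hm h1)
    (Real.log_le_log (hm.trans_le h1) h2)



lemma sa_smul (r : ℝ) (α : V →L[ℂ] V) (hα : IsSelfAdjoint α) :
    IsSelfAdjoint (r • α) := by
  rw [isSelfAdjoint_iff, star_smul, star_trivial, hα.star_eq]

lemma sa_exp (α : V →L[ℂ] V) (hα : IsSelfAdjoint α) : IsSelfAdjoint (exp α) := by
  rw [isSelfAdjoint_iff, star_exp, hα.star_eq]

lemma exp_mul_exp_neg (α : V →L[ℂ] V) : exp α * exp (-α) = 1 := by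
  rw [← exp_add_of_commute (Commute.refl α).neg_right, add_neg_cancel, exp_zero]

lemma exp_neg_mul_exp (α : V →L[ℂ] V) : exp (-α) * exp α = 1 := by
  rw [← exp_add_of_commute (Commute.refl α).neg_left, neg_add_cancel, exp_zero]

lemma exp_injective (α : V →L[ℂ] V) : Function.Injective ⇑(exp α : V →L[ℂ] V) := by
  intro v w h
  have h2 : (exp (-α) * exp α) v = (exp (-α) * exp α) w := by
    simp only [ContinuousLinearMap.mul_apply, h]
  simpa [exp_neg_mul_exp] using h2

lemma isometry_injective (θ : V →L[ℂ] W) (hθ : ∀ v, ‖θ v‖ = ‖v‖) :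
    Function.Injective θ := by
  intro x y hxy
  have : ‖x - y‖ = 0 := by rw [← hθ (x - y), map_sub, hxy, sub_self, norm_zero]
  exact sub_eq_zero.mp (norm_eq_zero.mp this)


lemma adjoint_exp (α : V →L[ℂ] V) (hα : IsSelfAdjoint α) :
    adjoint (exp α) = exp α := by
  rw [← star_eq_adjoint, star_exp, hα.star_eq]

lemma adjF (α : V →L[ℂ] V) (hα : IsSelfAdjoint α) (θ : V →L[ℂ] W)
    (hθ : ∀ v, ‖θ v‖ = ‖v‖) :
    adjoint (-(θ ∘L exp α)) ∘L (-(θ ∘L exp α)) = exp ((2 : ℝ) • α) := by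
  rw [map_neg, neg_comp, comp_neg, neg_neg, adjoint_comp, adjoint_exp α hα,
    comp_assoc, ← comp_assoc (adjoint θ) θ (exp α), adj_comp_self θ hθ,
    ContinuousLinearMap.one_def, ContinuousLinearMap.id_comp]
  have : exp α ∘L exp α = exp (α + α) := by
    rw [exp_add_of_commute (Commute.refl α)]; rfl
  rw [this, ← two_smul ℝ α]


lemma two_smul_eq_log (α : V →L[ℂ] V) (hα : IsSelfAdjoint α) (θ : V →L[ℂ] W)
    (hθ : ∀ v, ‖θ v‖ = ‖v‖) (γ : V →L[ℂ] W) (hFp : -(θ ∘L exp α) = γ) :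
    (2 : ℝ) • α = CFC.log (adjoint γ ∘L γ) := by
  rw [← hFp, adjF α hα θ hθ, CFC.log_exp _ (sa_smul 2 α hα)]

lemma theta_determined (α : V →L[ℂ] V) (θ : V →L[ℂ] W) (γ : V →L[ℂ] W)
    (hFp : -(θ ∘L exp α) = γ) : θ = -(γ ∘L exp (-α)) := by
  rw [← hFp]
  rw [neg_comp, neg_neg, comp_assoc]
  have : exp α ∘L exp (-α) = (1 : V →L[ℂ] V) := exp_mul_exp_neg α
  rw [this, ContinuousLinearMap.one_def, ContinuousLinearMap.comp_id]

lemma exists_preimage (γ : V →L[ℂ] W) (hγ : Function.Injective γ) :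
    ∃ (α : V →L[ℂ] V) (θ : V →L[ℂ] W),
      IsSelfAdjoint α ∧ (∀ v, ‖θ v‖ = ‖v‖) ∧ -(θ ∘L exp α) = γ := by
  set a := adjoint γ ∘L γ with ha_def
  have hsa : IsSelfAdjoint a := isSelfAdjoint_adj_comp γ
  have hpos : ∀ x ∈ spectrum ℝ a, 0 < x := spectrum_pos γ hγ
  set α := (2⁻¹ : ℝ) • CFC.log a with hα_def
  have hα : IsSelfAdjoint α := sa_smul _ _ IsSelfAdjoint.log
  have h21 : (2 : ℝ) • α = CFC.log a := by
    rw [hα_def, smul_smul]; norm_num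
  have hexp2 : exp α * exp α = a := by
    rw [← exp_add_of_commute (Commute.refl α), ← two_smul ℝ α, h21]
    exact CFC.exp_log a ((StarOrderedRing.isStrictlyPositive_iff_spectrum_pos (R := ℝ) a hsa).mpr hpos)
  set E := exp (-α) with hE_def
  have hEsa : IsSelfAdjoint E := sa_exp _ hα.neg
  have hE1 : E * exp α = 1 := exp_neg_mul_exp α
  have hE2 : exp α * E = 1 := exp_mul_exp_neg α
  have hEaE : E * (a * E) = 1 := by
    rw [← hexp2, mul_assoc (exp α) (exp α) E, ← mul_assoc E (exp α) _,
      hE1, one_mul, hE2]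
  set θ : V →L[ℂ] W := -(γ ∘L E) with hθ_def
  have hadjE : adjoint E = E := by rw [← star_eq_adjoint, hEsa.star_eq]
  have hθ : ∀ v, ‖θ v‖ = ‖v‖ := by
    intro v
    have h1 : (⟪θ v, θ v⟫ : ℂ) = ⟪v, v⟫ := by
      have e1 : θ v = -(γ (E v)) := rfl
      rw [e1, inner_neg_neg]
      rw [← adjoint_inner_left]
      have e2 : adjoint γ (γ (E v)) = a (E v) := rfl
      rw [e2]
      calc (⟪a (E v), E v⟫ : ℂ) = ⟪adjoint E (a (E v)), v⟫ := by
            rw [← adjoint_inner_left]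
        _ = ⟪E (a (E v)), v⟫ := by rw [hadjE]
        _ = ⟪(E * (a * E)) v, v⟫ := by rfl
        _ = ⟪v, v⟫ := by rw [hEaE]; rfl
    have h3 : ‖θ v‖ ^ 2 = ‖v‖ ^ 2 := by
      have h2 := congrArg RCLike.re h1
      rwa [inner_self_eq_norm_sq, inner_self_eq_norm_sq] at h2
    have := congrArg Real.sqrt h3
    simpa [Real.sqrt_sq, norm_nonneg] using this
  refine ⟨α, θ, hα, hθ, ?_⟩
  rw [hθ_def, neg_comp, neg_neg, comp_assoc]
  have : E ∘L exp α = (1 : V →L[ℂ] V) := hE1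
  rw [this, ContinuousLinearMap.one_def, ContinuousLinearMap.comp_id]


lemma algebraMap_nonneg' {t : ℝ} (ht : 0 ≤ t) :
    (0 : V →L[ℂ] V) ≤ algebraMap ℝ (V →L[ℂ] V) t := by
  have h := star_mul_self_nonneg (algebraMap ℝ (V →L[ℂ] V) (Real.sqrt t))
  rwa [(IsSelfAdjoint.algebraMap _ (IsSelfAdjoint.all _)).star_eq, ← map_mul,
    Real.mul_self_sqrt ht] at h

lemma algebraMap_mono' {r s : ℝ} (h : r ≤ s) :
    algebraMap ℝ (V →L[ℂ] V) r ≤ algebraMap ℝ (V →L[ℂ] V) s := by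
  rw [← sub_nonneg, ← map_sub]
  exact algebraMap_nonneg' (by linarith)

end Miller5Aux

open Miller5Aux in
/-- Let `V`, `W` be Hermitian spaces with `dim V ≤ dim W`.  The map
`κ' : s(V) × 𝓛(V,W) → inj(V,W)`, `(α, θ) ↦ −θ ∘ Exp α`, is a homeomorphism (its
continuous inverse being `γ ↦ (log ρ(γ), −σ(γ))`): i.e. there is a homeomorphism from
`s(V) × 𝓛(V,W)` onto the subspace of injective homomorphisms whose underlying map is
`(α, θ) ↦ −θ ∘ Exp α`.  Here `s(V)` is the space of self-adjoint endomorphisms of `V` and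
`𝓛(V,W)` the space of linear isometries `V → W`, all with the norm topology. -/
theorem miller_stmt5 {V W : Type*} [NormedAddCommGroup V] [InnerProductSpace ℂ V]
    [FiniteDimensional ℂ V] [NormedAddCommGroup W] [InnerProductSpace ℂ W]
    [FiniteDimensional ℂ W] (hdim : Module.finrank ℂ V ≤ Module.finrank ℂ W) :
    ∃ e : ({α : V →L[ℂ] V // IsSelfAdjoint α} × {θ : V →L[ℂ] W // ∀ v, ‖θ v‖ = ‖v‖}) ≃ₜ
        {γ : V →L[ℂ] W // Function.Injective γ},
      ∀ p : {α : V →L[ℂ] V // IsSelfAdjoint α} × {θ : V →L[ℂ] W // ∀ v, ‖θ v‖ = ‖v‖},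
        ((e p : {γ : V →L[ℂ] W // Function.Injective γ}) : V →L[ℂ] W) =
          -((p.2 : V →L[ℂ] W).comp (NormedSpace.exp (p.1 : V →L[ℂ] V))) := by
  classical
  -- the forward map
  set F : ({α : V →L[ℂ] V // IsSelfAdjoint α} × {θ : V →L[ℂ] W // ∀ v, ‖θ v‖ = ‖v‖}) →
      (V →L[ℂ] W) := fun p => -((p.2 : V →L[ℂ] W) ∘L exp (p.1 : V →L[ℂ] V)) with hF
  have hFinj : ∀ p, Function.Injective ⇑(F p) := by
    intro p v w h
    have h2 : (p.2 : V →L[ℂ] W) (exp (p.1 : V →L[ℂ] V) v) =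
        (p.2 : V →L[ℂ] W) (exp (p.1 : V →L[ℂ] V) w) := by
      have h3 : -((p.2 : V →L[ℂ] W) (exp (p.1 : V →L[ℂ] V) v)) =
          -((p.2 : V →L[ℂ] W) (exp (p.1 : V →L[ℂ] V) w)) := h
      exact neg_inj.mp h3
    exact exp_injective _ (isometry_injective _ p.2.2 h2)
  set F' : ({α : V →L[ℂ] V // IsSelfAdjoint α} × {θ : V →L[ℂ] W // ∀ v, ‖θ v‖ = ‖v‖}) →
      {γ : V →L[ℂ] W // Function.Injective γ} := fun p => ⟨F p, hFinj p⟩ with hF'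
  have hbij : Function.Bijective F' := by
    constructor
    · intro p q h
      have hv : F p = F q := congrArg Subtype.val h
      have hα : (p.1 : V →L[ℂ] V) = q.1 := by
        have h1 := two_smul_eq_log (p.1 : V →L[ℂ] V) p.1.2 (p.2 : V →L[ℂ] W) p.2.2 (F p) rfl
        have h2 := two_smul_eq_log (q.1 : V →L[ℂ] V) q.1.2 (q.2 : V →L[ℂ] W) q.2.2 (F q) rfl
        rw [← hv] at h2
        have h3 : (2 : ℝ) • (p.1 : V →L[ℂ] V) = (2 : ℝ) • (q.1 : V →L[ℂ] V) := h1.trans h2.symm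
        exact smul_right_injective _ (two_ne_zero) h3
      have hθ : (p.2 : V →L[ℂ] W) = q.2 := by
        have h1 := theta_determined (p.1 : V →L[ℂ] V) (p.2 : V →L[ℂ] W) (F p) rfl
        have h2 := theta_determined (q.1 : V →L[ℂ] V) (q.2 : V →L[ℂ] W) (F q) rfl
        rw [← hv, ← hα] at h2
        exact h1.trans h2.symm
      exact Prod.ext (Subtype.ext hα) (Subtype.ext hθ)
    · rintro ⟨γ, hγ⟩
      obtain ⟨α, θ, hα, hθ, hFp⟩ := exists_preimage γ hγ
      exact ⟨⟨⟨α, hα⟩, ⟨θ, hθ⟩⟩, Subtype.ext hFp⟩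
  set e := Equiv.ofBijective F' hbij with he
  have hFc : Continuous F' := by
    apply Continuous.subtype_mk
    exact ((continuous_subtype_val.comp continuous_snd).clm_comp
      ((exp_continuous).comp (continuous_subtype_val.comp continuous_fst))).neg
  have hsymm : Continuous e.symm := by
    rw [continuous_iff_seqContinuous]
    intro γs γL hγs
    apply tendsto_of_subseq_tendsto
    intro ns hns
    have hγv : Tendsto (fun n => ((γs n : {γ : V →L[ℂ] W // Function.Injective γ}) : V →L[ℂ] W))
        atTop (𝓝 (γL : V →L[ℂ] W)) := (continuous_subtype_val.tendsto _).comp hγs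
    set Φ : (V →L[ℂ] W) → (V →L[ℂ] V) := fun γ => adjoint γ ∘L γ with hΦ
    have hΦc : Continuous Φ :=
      Continuous.clm_comp ((adjoint (𝕜 := ℂ) (E := V) (F := W)).continuous) continuous_id
    set aL := Φ (γL : V →L[ℂ] W) with haL
    have hsaL : IsSelfAdjoint aL := isSelfAdjoint_adj_comp _
    obtain ⟨m, hm0, hmspec⟩ := exists_lower (spectrum_pos _ γL.2)
    have haconv : Tendsto (fun n => Φ ((γs n : {γ : V →L[ℂ] W // Function.Injective γ}) : V →L[ℂ] W))
        atTop (𝓝 aL) := (hΦc.tendsto _).comp hγv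
    set M := ‖aL‖ + 1 with hM
    set R := 2⁻¹ * max |Real.log (m / 2)| |Real.log M| with hR
    have hR0 : 0 ≤ R := by positivity
    have hev : ∀ᶠ n in atTop, ‖((e.symm (γs n)).1 : V →L[ℂ] V)‖ ≤ R := by
      have h1 : ∀ᶠ n in atTop,
          Φ ((γs n : {γ : V →L[ℂ] W // Function.Injective γ}) : V →L[ℂ] W) ∈
            Metric.closedBall aL (min (m / 2) 1) :=
        haconv (Metric.closedBall_mem_nhds _ (by positivity))
      filter_upwards [h1] with n hn
      set γn := ((γs n : {γ : V →L[ℂ] W // Function.Injective γ}) : V →L[ℂ] W) with hγn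
      set an := Φ γn with han
      have hsan : IsSelfAdjoint an := isSelfAdjoint_adj_comp _
      have hd : ‖an - aL‖ ≤ min (m / 2) 1 := by
        rwa [Metric.mem_closedBall, dist_eq_norm] at hn
      have hub : ∀ x ∈ spectrum ℝ an, x ≤ M := by
        intro x hx
        have h2 := (le_algebraMap_iff_spectrum_le (R := ℝ) hsan).mp
          (IsSelfAdjoint.le_algebraMap_norm_self hsan) x hx
        refine h2.trans ?_
        have h3 : ‖an‖ ≤ ‖aL‖ + ‖an - aL‖ := by
          calc ‖an‖ = ‖aL + (an - aL)‖ := by rw [add_sub_cancel]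
            _ ≤ ‖aL‖ + ‖an - aL‖ := norm_add_le _ _
        have h4 : ‖an - aL‖ ≤ 1 := hd.trans (min_le_right _ _)
        rw [hM]; linarith
      have hlb : ∀ x ∈ spectrum ℝ an, m / 2 ≤ x := by
        have hALm : algebraMap ℝ (V →L[ℂ] V) m ≤ aL :=
          (algebraMap_le_iff_le_spectrum (R := ℝ) hsaL).mpr hmspec
        have hnorm : ‖aL - an‖ ≤ m / 2 := by
          rw [norm_sub_rev]; exact hd.trans (min_le_left _ _)
        have hsub : aL - an ≤ algebraMap ℝ (V →L[ℂ] V) (m / 2) :=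
          (IsSelfAdjoint.le_algebraMap_norm_self (hsaL.sub hsan)).trans
            (algebraMap_mono' hnorm)
        have h4 : aL - algebraMap ℝ (V →L[ℂ] V) (m / 2) ≤ an := sub_le_comm.mp hsub
        have hmm : algebraMap ℝ (V →L[ℂ] V) (m / 2) =
            algebraMap ℝ (V →L[ℂ] V) m - algebraMap ℝ (V →L[ℂ] V) (m / 2) := by
          rw [← map_sub]; congr 1; ring
        have h5 : algebraMap ℝ (V →L[ℂ] V) (m / 2) ≤ an := by
          rw [hmm]
          exact (sub_le_sub_right hALm _).trans h4
        exact fun x hx => (algebraMap_le_iff_le_spectrum (R := ℝ) hsan).mp h5 x hx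
      -- the F-equation for e.symm (γs n)
      have hFeq : -(((e.symm (γs n)).2 : V →L[ℂ] W) ∘L
          exp ((e.symm (γs n)).1 : V →L[ℂ] V)) = γn := by
        have h := congrArg Subtype.val (e.apply_symm_apply (γs n))
        exact h
      have htwo : (2 : ℝ) • ((e.symm (γs n)).1 : V →L[ℂ] V) = CFC.log an :=
        two_smul_eq_log _ (e.symm (γs n)).1.2 _ (e.symm (γs n)).2.2 _ hFeq
      have hαn : ((e.symm (γs n)).1 : V →L[ℂ] V) = (2⁻¹ : ℝ) • CFC.log an := by
        rw [← htwo, smul_smul]; norm_num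
      have h6 : ‖CFC.log an‖ ≤ max |Real.log (m / 2)| |Real.log M| :=
        norm_log_le (by positivity) fun x hx => ⟨hlb x hx, hub x hx⟩
      rw [hαn]
      refine (_root_.norm_smul_le (2⁻¹ : ℝ) (CFC.log an)).trans ?_
      have h7 : ‖(2⁻¹ : ℝ)‖ = 2⁻¹ := by norm_num
      rw [h7, hR]
      exact mul_le_mul_of_nonneg_left h6 (by norm_num)
    -- the compact set
    have hCcl : IsClosed {q : (V →L[ℂ] V) × (V →L[ℂ] W) |
        IsSelfAdjoint q.1 ∧ ∀ v, ‖q.2 v‖ = ‖v‖} := by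
      have e1 : {q : (V →L[ℂ] V) × (V →L[ℂ] W) | IsSelfAdjoint q.1 ∧ ∀ v, ‖q.2 v‖ = ‖v‖} =
          (Prod.fst ⁻¹' {a : V →L[ℂ] V | star a = a}) ∩
            (⋂ v : V, {q : (V →L[ℂ] V) × (V →L[ℂ] W) | ‖q.2 v‖ = ‖v‖}) := by
        ext q'
        simp [Set.mem_iInter, IsSelfAdjoint]
      rw [e1]
      refine IsClosed.inter
        ((isClosed_eq continuous_star continuous_id).preimage continuous_fst) ?_
      exact isClosed_iInter fun v =>
        isClosed_eq ((continuous_snd.clm_apply continuous_const).norm) continuous_const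
    set C : Set ((V →L[ℂ] V) × (V →L[ℂ] W)) :=
      {q | IsSelfAdjoint q.1 ∧ ∀ v, ‖q.2 v‖ = ‖v‖} with hC
    set K : Set ((V →L[ℂ] V) × (V →L[ℂ] W)) :=
      (Metric.closedBall 0 R ×ˢ Metric.closedBall 0 1) ∩ C with hK
    have hKcomp : IsCompact K :=
      ((isCompact_closedBall (0 : V →L[ℂ] V) R).prod
        (isCompact_closedBall (0 : V →L[ℂ] W) 1)).inter_right hCcl
    set q : ℕ → ((V →L[ℂ] V) × (V →L[ℂ] W)) :=
      fun k => (((e.symm (γs (ns k))).1 : V →L[ℂ] V),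
        ((e.symm (γs (ns k))).2 : V →L[ℂ] W)) with hq
    have hfreq : ∃ᶠ k in atTop, q k ∈ K := by
      apply Filter.Eventually.frequently
      filter_upwards [hns.eventually hev] with k hk
      refine ⟨⟨?_, ?_⟩, (e.symm (γs (ns k))).1.2, (e.symm (γs (ns k))).2.2⟩
      · rw [Metric.mem_closedBall, dist_zero_right]; exact hk
      · rw [Metric.mem_closedBall, dist_zero_right]
        refine opNorm_le_bound _ zero_le_one fun v => ?_
        rw [(e.symm (γs (ns k))).2.2 v, one_mul]
    obtain ⟨x, hxK, ms, hms, hlim⟩ := hKcomp.tendsto_subseq' hfreq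
    refine ⟨ms, ?_⟩
    set pt : ({α : V →L[ℂ] V // IsSelfAdjoint α} × {θ : V →L[ℂ] W // ∀ v, ‖θ v‖ = ‖v‖}) :=
      (⟨x.1, hxK.2.1⟩, ⟨x.2, hxK.2.2⟩) with hpt
    have h1 : Tendsto (fun k => (e.symm (γs (ns (ms k)))).1) atTop (𝓝 pt.1) :=
      tendsto_subtype_rng.mpr ((continuous_fst.tendsto x).comp hlim)
    have h2 : Tendsto (fun k => (e.symm (γs (ns (ms k)))).2) atTop (𝓝 pt.2) :=
      tendsto_subtype_rng.mpr ((continuous_snd.tendsto x).comp hlim)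
    have hplim : Tendsto (fun k => e.symm (γs (ns (ms k)))) atTop (𝓝 pt) :=
      h1.prodMk_nhds h2
    have hFpt : e pt = γL := by
      have hcur : Tendsto (fun k => e (e.symm (γs (ns (ms k))))) atTop (𝓝 (e pt)) :=
        (hFc.tendsto pt).comp hplim
      have hsub : Tendsto (fun k => γs (ns (ms k))) atTop (𝓝 γL) :=
        hγs.comp (hns.comp hms.tendsto_atTop)
      have h3 : (fun k => e (e.symm (γs (ns (ms k))))) = fun k => γs (ns (ms k)) :=
        funext fun k => e.apply_symm_apply _
      exact tendsto_nhds_unique (h3 ▸ hcur) hsub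
    have hpteq : pt = e.symm γL := by rw [← hFpt, Equiv.symm_apply_apply]
    rwa [hpteq] at hplim
  exact ⟨⟨e, hFc, hsymm⟩, fun p => rfl⟩
end

section
/- Let V be a Hermitian space of dimension d. The eigenvalue map η' : s(V) → D'(d) defined by η'(α) := (e_0(α), …, e_{d−1}(α)) is a continuous proper surjection. -/
namespace MillerStmt6

open scoped ComplexConjugate

local notation "⟪" x ", " y "⟫" => @inner ℂ _ _ x y

variable {V : Type*} [NormedAddCommGroup V] [InnerProductSpace ℂ V]

lemma repr_zero_of_not_mem {d : ℕ} (w : OrthonormalBasis (Fin d) ℂ V) {S : Set (Fin d)}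
    {x : V} (hx : x ∈ Submodule.span ℂ (w '' S)) {j : Fin d} (hj : j ∉ S) :
    w.repr x j = 0 := by
  rw [w.repr_apply_apply]
  induction hx using Submodule.span_induction with
  | mem y hy =>
    obtain ⟨i, hi, rfl⟩ := hy
    exact w.orthonormal.2 (fun h => hj (h ▸ hi))
  | zero => simp
  | add y z _ _ hy hz => rw [inner_add_right, hy, hz, add_zero]
  | smul c y _ hy => rw [inner_smul_right, hy, mul_zero]

lemma re_inner_eq_sum {d : ℕ} (w : OrthonormalBasis (Fin d) ℂ V) (β : V →L[ℂ] V)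
    (s : Fin d → ℝ) (hβ : ∀ j, β (w j) = (s j : ℂ) • w j) (x : V) :
    Complex.re ⟪x, β x⟫ = ∑ j, s j * ‖w.repr x j‖ ^ 2 := by
  have hβx : β x = ∑ i, ((s i : ℂ) * w.repr x i) • w i := by
    conv_lhs => rw [← w.sum_repr x]
    rw [map_sum]
    refine Finset.sum_congr rfl fun i _ => ?_
    rw [map_smul, hβ, smul_smul, mul_comm]
  rw [hβx, inner_sum, Complex.re_sum]
  refine Finset.sum_congr rfl fun i _ => ?_
  rw [inner_smul_right]
  have h1 : ⟪x, w i⟫ = conj (w.repr x i) := by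
    rw [w.repr_apply_apply, inner_conj_symm]
  rw [h1, mul_assoc, Complex.mul_conj, ← Complex.ofReal_mul, Complex.ofReal_re,
    Complex.normSq_eq_norm_sq]

lemma norm_sq_eq_sum {d : ℕ} (w : OrthonormalBasis (Fin d) ℂ V) (x : V) :
    ‖x‖ ^ 2 = ∑ j, ‖w.repr x j‖ ^ 2 := by
  have h : ‖x‖ = ‖w.repr x‖ := (w.repr.norm_map x).symm
  rw [h, EuclideanSpace.norm_eq, Real.sq_sqrt (by positivity)]

lemma rayleigh_ge {d : ℕ} (w : OrthonormalBasis (Fin d) ℂ V) (β : V →L[ℂ] V)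
    (s : Fin d → ℝ) (hβ : ∀ j, β (w j) = (s j : ℂ) • w j) {S : Set (Fin d)} {c : ℝ}
    (hS : ∀ j ∈ S, c ≤ s j) {x : V} (hx : x ∈ Submodule.span ℂ (w '' S)) :
    c * ‖x‖ ^ 2 ≤ Complex.re ⟪x, β x⟫ := by
  classical
  rw [re_inner_eq_sum w β s hβ x, norm_sq_eq_sum w x, Finset.mul_sum]
  refine Finset.sum_le_sum fun j _ => ?_
  by_cases hj : j ∈ S
  · exact mul_le_mul_of_nonneg_right (hS j hj) (by positivity)
  · rw [repr_zero_of_not_mem w hx hj]; simp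


lemma finrank_span_Iic {d : ℕ} [FiniteDimensional ℂ V] (v : OrthonormalBasis (Fin d) ℂ V)
    (i : Fin d) :
    Module.finrank ℂ (Submodule.span ℂ (v '' Set.Iic i)) = (i : ℕ) + 1 := by
  rw [Set.image_eq_range]
  exact (finrank_span_eq_card
    (v.orthonormal.linearIndependent.comp _ Subtype.val_injective)).trans
    (by convert (Fintype.card_Iic i).trans (Fin.card_Iic i))

lemma finrank_span_Ici {d : ℕ} [FiniteDimensional ℂ V] (v : OrthonormalBasis (Fin d) ℂ V)
    (i : Fin d) :
    Module.finrank ℂ (Submodule.span ℂ (v '' Set.Ici i)) = d - (i : ℕ) := by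
  rw [Set.image_eq_range]
  exact (finrank_span_eq_card
    (v.orthonormal.linearIndependent.comp _ Subtype.val_injective)).trans
    (by convert (Fintype.card_Ici i).trans (Fin.card_Ici i))

lemma weyl {d : ℕ} [FiniteDimensional ℂ V] (hd : Module.finrank ℂ V = d)
    {α β : V →L[ℂ] V} (v w : OrthonormalBasis (Fin d) ℂ V) {t s : Fin d → ℝ}
    (ht : Monotone t) (hs : Monotone s)
    (hv : ∀ i, α (v i) = (t i : ℂ) • v i) (hw : ∀ i, β (w i) = (s i : ℂ) • w i)
    (i : Fin d) : s i ≤ t i + ‖β - α‖ := by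
  set p := Submodule.span ℂ (v '' Set.Iic i) with hp
  set q := Submodule.span ℂ (w '' Set.Ici i) with hq
  have hdim : 0 < Module.finrank ℂ ↥(p ⊓ q) := by
    have h1 := Submodule.finrank_sup_add_finrank_inf_eq p q
    have h2 : Module.finrank ℂ ↥(p ⊔ q) ≤ d := hd ▸ Submodule.finrank_le _
    have h3 := finrank_span_Iic v i
    have h4 := finrank_span_Ici w i
    have h5 : (i : ℕ) < d := i.isLt
    rw [← hp] at h3; rw [← hq] at h4
    omega
  obtain ⟨x, hx0⟩ := Module.finrank_pos_iff_exists_ne_zero.mp hdim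
  have hxp : (x : V) ∈ p := x.2.1
  have hxq : (x : V) ∈ q := x.2.2
  have hxne : (x : V) ≠ 0 := fun h => hx0 (Subtype.ext h)
  have hnx : (0 : ℝ) < ‖(x : V)‖ ^ 2 := pow_pos (norm_pos_iff.mpr hxne) 2
  have h1 : s i * ‖(x : V)‖ ^ 2 ≤ Complex.re ⟪(x : V), β x⟫ :=
    rayleigh_ge w β s hw (fun j hj => hs hj) hxq
  have h2 : Complex.re ⟪(x : V), α x⟫ ≤ t i * ‖(x : V)‖ ^ 2 := by
    have hneg : ∀ j, (-α) (v j) = ((-(t j) : ℝ) : ℂ) • v j := fun j => by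
      simp [hv j, neg_smul]
    have := rayleigh_ge v (-α) (fun j => -(t j)) hneg
      (S := Set.Iic i) (c := -(t i)) (fun j hj => neg_le_neg (ht hj)) hxp
    simp only [ContinuousLinearMap.neg_apply, inner_neg_right, Complex.neg_re] at this
    linarith
  have h3 : Complex.re ⟪(x : V), (β - α) x⟫ ≤ ‖β - α‖ * ‖(x : V)‖ ^ 2 := by
    have hre : Complex.re ⟪(x : V), (β - α) x⟫ ≤ ‖⟪(x : V), (β - α) x⟫‖ :=
      Complex.re_le_norm _
    have hcs : ‖⟪(x : V), (β - α) x⟫‖ ≤ ‖(x : V)‖ * ‖(β - α) x‖ := norm_inner_le_norm _ _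
    have hop : ‖(β - α) x‖ ≤ ‖β - α‖ * ‖(x : V)‖ := (β - α).le_opNorm _
    nlinarith [norm_nonneg (x : V)]
  have h4 : Complex.re ⟪(x : V), (β - α) x⟫
      = Complex.re ⟪(x : V), β x⟫ - Complex.re ⟪(x : V), α x⟫ := by
    rw [ContinuousLinearMap.sub_apply, inner_sub_right]
    simp
  have key : (s i - t i) * ‖(x : V)‖ ^ 2 ≤ ‖β - α‖ * ‖(x : V)‖ ^ 2 := by nlinarith
  have := le_of_mul_le_mul_right key hnx
  linarith


lemma unique_tuple {d : ℕ} [FiniteDimensional ℂ V] (hd : Module.finrank ℂ V = d)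
    {α : V →L[ℂ] V} (v w : OrthonormalBasis (Fin d) ℂ V) {t s : Fin d → ℝ}
    (ht : Monotone t) (hs : Monotone s)
    (hv : ∀ i, α (v i) = (t i : ℂ) • v i) (hw : ∀ i, α (w i) = (s i : ℂ) • w i) :
    t = s := by
  funext i
  have h1 := weyl hd v w ht hs hv hw i
  have h2 := weyl hd w v hs ht hw hv i
  rw [sub_self, norm_zero] at h1 h2
  linarith

lemma exists_eigenbasis {d : ℕ} [FiniteDimensional ℂ V] (hd : Module.finrank ℂ V = d)
    {α : V →L[ℂ] V} (hα : IsSelfAdjoint α) :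
    ∃ (t : Fin d → ℝ) (v : OrthonormalBasis (Fin d) ℂ V),
      Monotone t ∧ ∀ i, α (v i) = (t i : ℂ) • v i := by
  have hsym : (α : V →ₗ[ℂ] V).IsSymmetric :=
    ContinuousLinearMap.isSelfAdjoint_iff_isSymmetric.mp hα
  set b := hsym.eigenvectorBasis hd
  set e := hsym.eigenvalues hd
  set σ := Tuple.sort e
  refine ⟨e ∘ σ, b.reindex σ.symm, Tuple.monotone_sort e, fun i => ?_⟩
  simp only [OrthonormalBasis.reindex_apply, Equiv.symm_symm, Function.comp_apply]
  exact hsym.apply_eigenvectorBasis hd (σ i)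

lemma exists_operator {d : ℕ} [FiniteDimensional ℂ V]
    (w : OrthonormalBasis (Fin d) ℂ V) (t : Fin d → ℝ) :
    ∃ α : V →L[ℂ] V, IsSelfAdjoint α ∧ ∀ i, α (w i) = (t i : ℂ) • w i := by
  classical
  refine ⟨∑ i, (t i : ℂ) • (innerSL ℂ (w i)).smulRight (w i), ?_, fun j => ?_⟩
  · have hP : ∀ i : Fin d, IsSelfAdjoint ((innerSL ℂ (w i)).smulRight (w i)) := fun i => by
      rw [ContinuousLinearMap.isSelfAdjoint_iff_isSymmetric]
      intro x y
      simp only [ContinuousLinearMap.smulRight_apply, innerSL_apply_apply,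
        inner_smul_left, inner_smul_right, inner_conj_symm, ContinuousLinearMap.coe_coe]
      ring
    have hsmul : ∀ i : Fin d,
        IsSelfAdjoint ((t i : ℂ) • (innerSL ℂ (w i)).smulRight (w i)) := fun i =>
      IsSelfAdjoint.smul (by simp [isSelfAdjoint_iff, Complex.star_def, Complex.conj_ofReal]) (hP i)
    show star _ = _
    rw [star_sum]
    exact Finset.sum_congr rfl fun i _ => hsmul i
  · simp only [ContinuousLinearMap.sum_apply, ContinuousLinearMap.smul_apply,
      ContinuousLinearMap.smulRight_apply, innerSL_apply_apply,
      orthonormal_iff_ite.mp w.orthonormal]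
    simp [Finset.sum_ite_eq, smul_smul]

lemma opNorm_le {d : ℕ} [FiniteDimensional ℂ V]
    (w : OrthonormalBasis (Fin d) ℂ V) {α : V →L[ℂ] V} (hα : IsSelfAdjoint α)
    {t : Fin d → ℝ} (hv : ∀ i, α (w i) = (t i : ℂ) • w i)
    {C : ℝ} (hC : 0 ≤ C) (ht : ∀ i, |t i| ≤ C) : ‖α‖ ≤ C := by
  refine α.opNorm_le_bound hC fun x => ?_
  have hsym : (α : V →ₗ[ℂ] V).IsSymmetric :=
    ContinuousLinearMap.isSelfAdjoint_iff_isSymmetric.mp hα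
  have hcomp : ∀ i, (α.comp α) (w i) = ((t i ^ 2 : ℝ) : ℂ) • w i := fun i => by
    rw [ContinuousLinearMap.comp_apply, hv i, map_smul, hv i, smul_smul]
    congr 1
    push_cast
    ring
  have h1 : ‖α x‖ ^ 2 = Complex.re ⟪x, (α.comp α) x⟫ := by
    have h : ⟪x, (α.comp α) x⟫ = ⟪α x, α x⟫ := (hsym x (α x)).symm
    rw [h, ← RCLike.re_to_complex]
    exact (inner_self_eq_norm_sq _).symm
  have h2 : Complex.re ⟪x, (α.comp α) x⟫ = ∑ j, t j ^ 2 * ‖w.repr x j‖ ^ 2 :=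
    re_inner_eq_sum w (α.comp α) (fun j => t j ^ 2) hcomp x
  have h3 : ∑ j, t j ^ 2 * ‖w.repr x j‖ ^ 2 ≤ C ^ 2 * ‖x‖ ^ 2 := by
    rw [norm_sq_eq_sum w x, Finset.mul_sum]
    refine Finset.sum_le_sum fun j _ => ?_
    have : t j ^ 2 ≤ C ^ 2 := by
      rw [← sq_abs]
      exact pow_le_pow_left₀ (abs_nonneg _) (ht j) 2
    exact mul_le_mul_of_nonneg_right this (by positivity)
  have h4 : ‖α x‖ ^ 2 ≤ (C * ‖x‖) ^ 2 := by rw [h1, h2]; nlinarith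
  have h5 := Real.sqrt_le_sqrt h4
  rwa [Real.sqrt_sq (norm_nonneg _), Real.sqrt_sq (by positivity)] at h5

end MillerStmt6

/-- Let `V` be a Hermitian space of dimension `d`.  The eigenvalue map
`η' : s(V) → D'(d)`, sending a self-adjoint endomorphism to its tuple of eigenvalues listed
in increasing order with multiplicity (characterized by: if `v` is an orthonormal basis of
eigenvectors with monotone eigenvalue tuple `t` then `η' α = t`), is a continuous proper
surjection onto `D'(d) = {t ∈ ℝ^d : t₀ ≤ … ≤ t_{d−1}}`. -/
theorem miller_stmt6 {V : Type*} [NormedAddCommGroup V] [InnerProductSpace ℂ V]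
    [FiniteDimensional ℂ V] (d : ℕ) (hd : Module.finrank ℂ V = d) :
    ∃ η : {α : V →L[ℂ] V // IsSelfAdjoint α} → {t : Fin d → ℝ // Monotone t},
      (∀ (α : {α : V →L[ℂ] V // IsSelfAdjoint α}) (t : Fin d → ℝ) (_ : Monotone t)
        (v : OrthonormalBasis (Fin d) ℂ V),
        (∀ i, (α : V →L[ℂ] V) (v i) = (t i : ℂ) • v i) → (η α : Fin d → ℝ) = t) ∧
      Continuous η ∧ Function.Surjective η ∧
      ∀ K : Set {t : Fin d → ℝ // Monotone t}, IsCompact K → IsCompact (η ⁻¹' K) := by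
  classical
  have hex : ∀ α : {α : V →L[ℂ] V // IsSelfAdjoint α},
      ∃ p : {t : Fin d → ℝ // Monotone t}, ∃ v : OrthonormalBasis (Fin d) ℂ V,
        ∀ i, (α : V →L[ℂ] V) (v i) = ((p : Fin d → ℝ) i : ℂ) • v i := by
    intro α
    obtain ⟨t, v, ht, hv⟩ := MillerStmt6.exists_eigenbasis hd α.2
    exact ⟨⟨t, ht⟩, v, hv⟩
  choose η w hw using hex
  have char : ∀ (α : {α : V →L[ℂ] V // IsSelfAdjoint α}) (t : Fin d → ℝ) (_ : Monotone t)
      (v : OrthonormalBasis (Fin d) ℂ V),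
      (∀ i, (α : V →L[ℂ] V) (v i) = (t i : ℂ) • v i) → (η α : Fin d → ℝ) = t :=
    fun α t ht v hv => MillerStmt6.unique_tuple hd (w α) v (η α).2 ht (hw α) hv
  have hlip : ∀ (a b : {α : V →L[ℂ] V // IsSelfAdjoint α}) (i : Fin d),
      (η a : Fin d → ℝ) i - (η b : Fin d → ℝ) i ≤ ‖(a : V →L[ℂ] V) - (b : V →L[ℂ] V)‖ := by
    intro a b i
    have := MillerStmt6.weyl hd (w b) (w a) (η b).2 (η a).2 (hw b) (hw a) i
    linarith
  have hcont : Continuous fun a : {α : V →L[ℂ] V // IsSelfAdjoint α} => (η a : Fin d → ℝ) := by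
    apply LipschitzWith.continuous (K := 1)
    refine LipschitzWith.of_dist_le_mul fun a b => ?_
    simp only [NNReal.coe_one, one_mul]
    refine (dist_pi_le_iff dist_nonneg).mpr fun i => ?_
    rw [Real.dist_eq, abs_sub_le_iff, Subtype.dist_eq, dist_eq_norm]
    refine ⟨hlip a b i, ?_⟩
    have := hlip b a i
    rwa [norm_sub_rev] at this
  have hηcont : Continuous η := continuous_induced_rng.2 hcont
  refine ⟨η, char, hηcont, ?_, ?_⟩
  · rintro ⟨t, ht⟩
    obtain ⟨α, hα, hav⟩ := MillerStmt6.exists_operator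
      ((stdOrthonormalBasis ℂ V).reindex (finCongr hd)) t
    exact ⟨⟨α, hα⟩, Subtype.ext (char ⟨α, hα⟩ t ht _ hav)⟩
  · intro K hK
    have hclosed : IsClosed (η ⁻¹' K) := hK.isClosed.preimage hηcont
    obtain ⟨C, hC⟩ := isBounded_iff_forall_norm_le.mp
      (hK.image continuous_subtype_val).isBounded
    have hb : ∀ a ∈ η ⁻¹' K, ‖(a : V →L[ℂ] V)‖ ≤ max C 0 := by
      intro a ha
      refine MillerStmt6.opNorm_le (w a) a.2 (hw a) (le_max_right _ _) fun i => ?_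
      have h1 : ‖(η a : Fin d → ℝ)‖ ≤ C := hC _ ⟨η a, ha, rfl⟩
      have h2 : |(η a : Fin d → ℝ) i| ≤ ‖(η a : Fin d → ℝ)‖ := by
        simpa [Real.norm_eq_abs] using norm_le_pi_norm ((η a : Fin d → ℝ)) i
      exact le_trans (le_trans h2 h1) (le_max_left _ _)
    have hsa : IsClosed {α : V →L[ℂ] V | IsSelfAdjoint α} :=
      isClosed_eq continuous_star continuous_id
    have hcl2 : IsClosed (Subtype.val '' (η ⁻¹' K)) :=
      hsa.isClosedEmbedding_subtypeVal.isClosedMap _ hclosed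
    have himg : IsCompact (Subtype.val '' (η ⁻¹' K)) := by
      apply Metric.isCompact_of_isClosed_isBounded hcl2
      exact isBounded_iff_forall_norm_le.mpr
        ⟨max C 0, by rintro x ⟨a, ha, rfl⟩; exact hb a ha⟩
    exact Topology.IsEmbedding.subtypeVal.isCompact_iff.mpr himg
end

section
/- Let V be a Hermitian space of dimension d. For t ∈ ℝ^d let Δ(t) denote the self-adjoint endomorphism of ℂ^d given by the diagonal matrix with entries t (with respect to the standard basis). Then the map ν' : 𝓛(ℂ^d, V) × D'(d) → s(V) defined by ν'(α, t) := α ∘ Δ(t) ∘ α† is a continuous proper surjection. -/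
open ContinuousLinearMap

set_option maxHeartbeats 1000000
set_option synthInstance.maxHeartbeats 200000

/-- The self-adjoint endomorphism of `ℂ^d` given by the diagonal matrix with entries `t`. -/
noncomputable def diagCLM {d : ℕ} (t : Fin d → ℝ) :
    EuclideanSpace ℂ (Fin d) →L[ℂ] EuclideanSpace ℂ (Fin d) :=
  Matrix.toEuclideanCLM (𝕜 := ℂ) (Matrix.diagonal fun i => (t i : ℂ))

lemma diagCLM_apply {d : ℕ} (t : Fin d → ℝ) (x : EuclideanSpace ℂ (Fin d)) (i : Fin d) :
    diagCLM t x i = (t i : ℂ) * x i := by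
  have h := Matrix.ofLp_toEuclideanCLM (𝕜 := ℂ) (Matrix.diagonal fun i => (t i : ℂ)) x
  have := congrFun (congrArg (fun f => (f : Fin d → ℂ)) h) i
  simpa [diagCLM, Matrix.mulVec_diagonal] using this

lemma diagCLM_selfAdjoint {d : ℕ} (t : Fin d → ℝ) : IsSelfAdjoint (diagCLM t) := by
  rw [IsSelfAdjoint, diagCLM, ← map_star]
  congr 1
  simp [Matrix.star_eq_conjTranspose, Matrix.diagonal_conjTranspose]

lemma diagCLM_continuous {d : ℕ} : Continuous (diagCLM (d := d)) := by
  have hadd : ∀ a b : Fin d → ℝ, diagCLM (a + b) = diagCLM a + diagCLM b := by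
    intro a b
    simp only [diagCLM]
    have e : (fun i => ((a + b) i : ℂ)) = (fun i => (a i : ℂ) + (b i : ℂ)) := by
      funext i; simp
    rw [e, ← Matrix.diagonal_add, map_add]
  have hsmul : ∀ (c : ℝ) (a : Fin d → ℝ), diagCLM (c • a) = c • diagCLM a := by
    intro c a
    simp only [diagCLM]
    have e : (fun i => ((c • a) i : ℂ)) = (c : ℂ) • (fun i => (a i : ℂ)) := by
      funext i; simp
    rw [e, Matrix.diagonal_smul, map_smul]
    ext x i : 2
    simp
  exact (IsLinearMap.mk' _ ⟨hadd, hsmul⟩).continuous_of_finiteDimensional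

open scoped InnerProductSpace in
lemma surj_aux {V : Type*} [NormedAddCommGroup V] [InnerProductSpace ℂ V]
    [FiniteDimensional ℂ V] (d : ℕ) (hd : Module.finrank ℂ V = d)
    (β : V →L[ℂ] V) (hβ : IsSelfAdjoint β) :
    ∃ (θ : EuclideanSpace ℂ (Fin d) →L[ℂ] V) (t : Fin d → ℝ),
      (∀ x, ‖θ x‖ = ‖x‖) ∧ Monotone t ∧ θ ∘L diagCLM t ∘L adjoint θ = β := by
  have hT : (↑β : V →ₗ[ℂ] V).IsSymmetric :=
    ContinuousLinearMap.isSelfAdjoint_iff_isSymmetric.mp hβ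
  set ev := hT.eigenvalues hd with hev
  set σ := Tuple.sort ev with hσ
  set t := ev ∘ σ with htdef
  have ht : Monotone t := Tuple.monotone_sort ev
  set b : OrthonormalBasis (Fin d) ℂ V := (hT.eigenvectorBasis hd).reindex σ.symm with hb
  have hbe : ∀ i, β (b i) = (t i : ℂ) • b i := by
    intro i
    have : b i = hT.eigenvectorBasis hd (σ i) := by
      simp [hb, OrthonormalBasis.reindex_apply]
    rw [this]
    exact hT.apply_eigenvectorBasis hd (σ i)
  refine ⟨((b.repr.symm : EuclideanSpace ℂ (Fin d) ≃ₗᵢ[ℂ] V) :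
      EuclideanSpace ℂ (Fin d) →L[ℂ] V), t, fun x => b.repr.symm.norm_map x, ht, ?_⟩
  have hadj : adjoint ((b.repr.symm : EuclideanSpace ℂ (Fin d) ≃ₗᵢ[ℂ] V) :
      EuclideanSpace ℂ (Fin d) →L[ℂ] V) = (b.repr : V ≃ₗᵢ[ℂ] EuclideanSpace ℂ (Fin d)) := by
    rw [LinearIsometryEquiv.adjoint_eq_symm]
    simp
  rw [hadj]
  ext v
  apply b.repr.injective
  have h1 : b.repr ((b.repr.symm : EuclideanSpace ℂ (Fin d) ≃ₗᵢ[ℂ] V)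
      (diagCLM t ((b.repr : V ≃ₗᵢ[ℂ] EuclideanSpace ℂ (Fin d)) v))) = diagCLM t (b.repr v) := by
    simp
  ext i
  have h2 : b.repr (β v) i = (t i : ℂ) * b.repr v i := by
    rw [OrthonormalBasis.repr_apply_apply, OrthonormalBasis.repr_apply_apply]
    have : ⟪b i, β v⟫_ℂ = ⟪β (b i), v⟫_ℂ := by
      rw [← ContinuousLinearMap.adjoint_inner_left]
      rw [hβ.adjoint_eq]
    rw [this, hbe i, inner_smul_left]
    simp
  show b.repr (b.repr.symm (diagCLM t (b.repr v))) i = b.repr (β v) i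
  rw [LinearIsometryEquiv.apply_symm_apply, diagCLM_apply, h2]

lemma isom_compact {V : Type*} [NormedAddCommGroup V] [InnerProductSpace ℂ V]
    [FiniteDimensional ℂ V] (d : ℕ) :
    IsCompact {θ : EuclideanSpace ℂ (Fin d) →L[ℂ] V | ∀ x, ‖θ x‖ = ‖x‖} := by
  have hclosed : IsClosed {θ : EuclideanSpace ℂ (Fin d) →L[ℂ] V | ∀ x, ‖θ x‖ = ‖x‖} := by
    have : {θ : EuclideanSpace ℂ (Fin d) →L[ℂ] V | ∀ x, ‖θ x‖ = ‖x‖} =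
        ⋂ x, {θ | ‖θ x‖ = ‖x‖} := by ext θ; simp
    rw [this]
    exact isClosed_iInter fun x =>
      isClosed_eq ((ContinuousLinearMap.apply ℂ V x).continuous.norm) continuous_const
  have hsub : {θ : EuclideanSpace ℂ (Fin d) →L[ℂ] V | ∀ x, ‖θ x‖ = ‖x‖} ⊆
      Metric.closedBall 0 1 := by
    intro θ hθ
    rw [Metric.mem_closedBall, dist_zero_right]
    exact ContinuousLinearMap.opNorm_le_bound θ zero_le_one fun x => by rw [hθ x, one_mul]
  exact (isCompact_closedBall 0 1).of_isClosed_subset hclosed hsub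

lemma mono_closed (d : ℕ) : IsClosed {t : Fin d → ℝ | Monotone t} := by
  have : {t : Fin d → ℝ | Monotone t} = ⋂ (i) (j) (_ : i ≤ j), {t | t i ≤ t j} := by
    ext t
    simp [Monotone]
  rw [this]
  exact isClosed_iInter fun i => isClosed_iInter fun j => isClosed_iInter fun _ =>
    isClosed_le (continuous_apply i) (continuous_apply j)

lemma mono_ball_compact (d : ℕ) (C : ℝ) :
    IsCompact {q : {t : Fin d → ℝ // Monotone t} | ‖(q : Fin d → ℝ)‖ ≤ C} := by
  rw [Topology.IsEmbedding.subtypeVal.isCompact_iff]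
  have himg : Subtype.val '' {q : {t : Fin d → ℝ // Monotone t} | ‖(q : Fin d → ℝ)‖ ≤ C} =
      {t : Fin d → ℝ | Monotone t} ∩ Metric.closedBall 0 C := by
    ext t
    simp only [Set.mem_image, Set.mem_setOf_eq, Set.mem_inter_iff, Metric.mem_closedBall,
      dist_zero_right]
    constructor
    · rintro ⟨⟨s, hs⟩, h1, rfl⟩; exact ⟨hs, h1⟩
    · rintro ⟨h1, h2⟩; exact ⟨⟨t, h1⟩, h2, rfl⟩
  rw [himg]
  exact ((isCompact_closedBall 0 C).inter_left (mono_closed d))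

/-- Let `V` be a Hermitian space of dimension `d`.  The map
`ν' : 𝓛(ℂ^d, V) × D'(d) → s(V)`, `(α, t) ↦ α ∘ Δ(t) ∘ α†`, takes values in the
self-adjoint endomorphisms, and is a continuous proper surjection onto `s(V)`. -/
theorem miller_stmt7 {V : Type*} [NormedAddCommGroup V] [InnerProductSpace ℂ V]
    [FiniteDimensional ℂ V] (d : ℕ) (hd : Module.finrank ℂ V = d) :
    ∀ ν : {θ : EuclideanSpace ℂ (Fin d) →L[ℂ] V // ∀ x, ‖θ x‖ = ‖x‖} ×
        {t : Fin d → ℝ // Monotone t} → (V →L[ℂ] V),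
      (∀ p, ν p = (p.1 : EuclideanSpace ℂ (Fin d) →L[ℂ] V) ∘L diagCLM p.2.1 ∘L
          ContinuousLinearMap.adjoint (p.1 : EuclideanSpace ℂ (Fin d) →L[ℂ] V)) →
      (∀ p, IsSelfAdjoint (ν p)) ∧
      Continuous ν ∧
      (∀ β : V →L[ℂ] V, IsSelfAdjoint β → ∃ p, ν p = β) ∧
      ∀ K : Set (V →L[ℂ] V), IsCompact K → IsCompact (ν ⁻¹' K) := by
  intro ν hν
  have hν' : ν = fun p => (p.1 : EuclideanSpace ℂ (Fin d) →L[ℂ] V) ∘L diagCLM p.2.1 ∘L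
      ContinuousLinearMap.adjoint (p.1 : EuclideanSpace ℂ (Fin d) →L[ℂ] V) := funext hν
  have hcont : Continuous ν := by
    rw [hν']
    exact (continuous_subtype_val.comp continuous_fst).clm_comp
      ((diagCLM_continuous.comp (continuous_subtype_val.comp continuous_snd)).clm_comp
        ((ContinuousLinearMap.adjoint (𝕜 := ℂ)
          (E := EuclideanSpace ℂ (Fin d)) (F := V)).continuous.comp
          (continuous_subtype_val.comp continuous_fst)))
  refine ⟨?_, hcont, ?_, ?_⟩
  · intro p
    rw [hν p]
    rw [IsSelfAdjoint, ContinuousLinearMap.star_eq_adjoint, adjoint_comp, adjoint_comp,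
      adjoint_adjoint, (diagCLM_selfAdjoint p.2.1).adjoint_eq, comp_assoc]
  · intro β hβ
    obtain ⟨θ, t, hθ, ht, h⟩ := surj_aux d hd β hβ
    exact ⟨(⟨θ, hθ⟩, ⟨t, ht⟩), by rw [hν]; exact h⟩
  · intro K hK
    obtain ⟨r, hr⟩ := hK.isBounded.subset_closedBall 0
    set C := max r 0 with hC
    have hC0 : 0 ≤ C := le_max_right r 0
    have hbound : ∀ p ∈ ν ⁻¹' K, ‖(p.2 : Fin d → ℝ)‖ ≤ C := by
      rintro ⟨⟨α, hα⟩, ⟨t, ht⟩⟩ hp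
      simp only [Set.mem_preimage] at hp
      have hνK : ‖ν (⟨α, hα⟩, ⟨t, ht⟩)‖ ≤ C := by
        have := hr hp
        rw [Metric.mem_closedBall, dist_zero_right] at this
        exact this.trans (le_max_left r 0)
      have h1 : adjoint α ∘L α = 1 := (norm_map_iff_adjoint_comp_self α).mp hα
      have h2 : diagCLM t = adjoint α ∘L (ν (⟨α, hα⟩, ⟨t, ht⟩) ∘L α) := by
        rw [hν]
        ext x
        have e1 : ∀ y, adjoint α (α y) = y := fun y => by
          have := ContinuousLinearMap.ext_iff.mp h1 y
          simpa using this
        simp only [comp_apply, e1]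
      have hα1 : ‖α‖ ≤ 1 :=
        ContinuousLinearMap.opNorm_le_bound α zero_le_one fun x => by rw [hα x, one_mul]
      have hadj1 : ‖adjoint α‖ ≤ 1 := by
        rw [(ContinuousLinearMap.adjoint (𝕜 := ℂ)).norm_map α] at *
        exact hα1
      have h3 : ‖diagCLM t‖ ≤ C := by
        rw [h2]
        calc ‖adjoint α ∘L (ν (⟨α, hα⟩, ⟨t, ht⟩) ∘L α)‖
            ≤ ‖adjoint α‖ * ‖ν (⟨α, hα⟩, ⟨t, ht⟩) ∘L α‖ := opNorm_comp_le _ _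
          _ ≤ ‖adjoint α‖ * (‖ν (⟨α, hα⟩, ⟨t, ht⟩)‖ * ‖α‖) := by
              exact mul_le_mul_of_nonneg_left (opNorm_comp_le _ _) (norm_nonneg _)
          _ ≤ 1 * (C * 1) := by
              apply mul_le_mul hadj1 _ (by positivity) zero_le_one
              exact mul_le_mul hνK hα1 (norm_nonneg _) hC0
          _ = C := by ring
      rw [pi_norm_le_iff_of_nonneg hC0]
      intro i
      rw [Real.norm_eq_abs]
      have hi : diagCLM t (EuclideanSpace.single i (1 : ℂ)) =
          EuclideanSpace.single i ((t i : ℂ)) := by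
        ext j
        rw [diagCLM_apply]
        simp [EuclideanSpace.single_apply]
        by_cases h : j = i <;> simp [h]
      have : ‖diagCLM t (EuclideanSpace.single i (1 : ℂ))‖ ≤
          ‖diagCLM t‖ * ‖EuclideanSpace.single i (1 : ℂ)‖ := le_opNorm _ _
      rw [hi, EuclideanSpace.norm_single, EuclideanSpace.norm_single] at this
      simp only [norm_one, mul_one, Complex.norm_real, Real.norm_eq_abs] at this
      exact this.trans h3
    have hsub : ν ⁻¹' K ⊆ (Set.univ : Set {θ : EuclideanSpace ℂ (Fin d) →L[ℂ] V //
        ∀ x, ‖θ x‖ = ‖x‖}) ×ˢ {q : {t : Fin d → ℝ // Monotone t} | ‖(q : Fin d → ℝ)‖ ≤ C} := by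
      intro p hp
      exact Set.mem_prod.mpr ⟨Set.mem_univ _, hbound p hp⟩
    have hAcomp : IsCompact (Set.univ : Set {θ : EuclideanSpace ℂ (Fin d) →L[ℂ] V //
        ∀ x, ‖θ x‖ = ‖x‖}) := by
      rw [Topology.IsEmbedding.subtypeVal.isCompact_iff, Set.image_univ, Subtype.range_coe_subtype]
      exact isom_compact d
    have hclosed : IsClosed (ν ⁻¹' K) := hK.isClosed.preimage hcont
    exact (hAcomp.prod (mono_ball_compact d C)).of_isClosed_subset hclosed hsub
end

section
/- Let V and W be Hermitian spaces with dim V ≤ dim W. The map μ' : s_+(V) × 𝓛(V,W) → Hom_ℂ(V,W) defined by μ'(α, θ) := −θ ∘ α is a continuous proper surjection. -/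
open ContinuousLinearMap Module


lemma aux_exists_isometry (X Y : Type*) [NormedAddCommGroup X] [InnerProductSpace ℂ X]
    [FiniteDimensional ℂ X] [NormedAddCommGroup Y] [InnerProductSpace ℂ Y]
    [FiniteDimensional ℂ Y] (h : finrank ℂ X ≤ finrank ℂ Y) :
    Nonempty (X →ₗᵢ[ℂ] Y) := by
  classical
  let b := stdOrthonormalBasis ℂ X
  let c := stdOrthonormalBasis ℂ Y
  let f : Fin (finrank ℂ X) → Y := c ∘ Fin.castLE h
  have hf : Orthonormal ℂ f := c.orthonormal.comp _ (Fin.castLE_injective h)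
  let T : X →ₗ[ℂ] Y := b.toBasis.constr ℂ f
  have hT : ∀ x : X, T x = ∑ i, b.repr x i • f i := by
    intro x
    rw [Basis.constr_apply_fintype]
    rfl
  refine ⟨⟨T, fun x => ?_⟩⟩
  have h1 : (inner ℂ (T x) (T x) : ℂ) = (inner ℂ x x : ℂ) := by
    conv_rhs => rw [← b.sum_repr x]
    rw [hT, hf.inner_sum, b.orthonormal.inner_sum]
  have h3 : (‖T x‖ : ℝ) ^ 2 = (‖x‖ : ℝ) ^ 2 := by
    rw [← inner_self_eq_norm_sq (𝕜 := ℂ), ← inner_self_eq_norm_sq (𝕜 := ℂ), h1]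
  nlinarith [norm_nonneg (T x), norm_nonneg x]

lemma aux_extend {V W : Type*} [NormedAddCommGroup V] [InnerProductSpace ℂ V]
    [FiniteDimensional ℂ V] [NormedAddCommGroup W] [InnerProductSpace ℂ W]
    [FiniteDimensional ℂ W] (hdim : finrank ℂ V ≤ finrank ℂ W)
    (S : Submodule ℂ V) (L : S →ₗᵢ[ℂ] W) :
    ∃ θ : V →ₗᵢ[ℂ] W, ∀ s : S, θ s = L s := by
  classical
  let LS := LinearMap.range L.toLinearMap
  have dim_perp : finrank ℂ Sᗮ ≤ finrank ℂ LSᗮ := by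
    have h1 : finrank ℂ LSᗮ = finrank ℂ W - finrank ℂ LS := by
      simp only [← LS.finrank_add_finrank_orthogonal, add_tsub_cancel_left]
    have h2 : finrank ℂ LS = finrank ℂ S := LinearMap.finrank_range_of_inj L.injective
    have h3 : finrank ℂ Sᗮ = finrank ℂ V - finrank ℂ S := by
      simp only [← S.finrank_add_finrank_orthogonal, add_tsub_cancel_left]
    have h4 : finrank ℂ S ≤ finrank ℂ V := S.finrank_le
    omega
  obtain ⟨E⟩ := aux_exists_isometry Sᗮ (LSᗮ : Submodule ℂ W) dim_perp
  let L3 : Sᗮ →ₗᵢ[ℂ] W := LSᗮ.subtypeₗᵢ.comp E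
  haveI : CompleteSpace S := FiniteDimensional.complete ℂ S
  haveI : CompleteSpace V := FiniteDimensional.complete ℂ V
  let p1 := (S.orthogonalProjectionOnto).toLinearMap
  let p2 := (Sᗮ.orthogonalProjectionOnto).toLinearMap
  let M := L.toLinearMap.comp p1 + L3.toLinearMap.comp p2
  have M_norm_map : ∀ x : V, ‖M x‖ = ‖x‖ := by
    intro x
    have Mx_decomp : M x = L (p1 x) + L3 (p2 x) := by
      simp only [M, LinearMap.add_apply, LinearMap.comp_apply,
        LinearIsometry.coe_toLinearMap]
    have Mx_orth : (inner ℂ (L (p1 x)) (L3 (p2 x)) : ℂ) = 0 := by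
      have Lp1x : L (p1 x) ∈ LS := LinearMap.mem_range_self L.toLinearMap (p1 x)
      have Lp2x : L3 (p2 x) ∈ LSᗮ := by
        simp only [L3, LinearIsometry.coe_comp, Function.comp_apply,
          Submodule.coe_subtypeₗᵢ]
        exact (E (p2 x)).2
      exact Submodule.inner_right_of_mem_orthogonal Lp1x Lp2x
    rw [← sq_eq_sq₀ (norm_nonneg _) (norm_nonneg _), Submodule.norm_sq_eq_add_norm_sq_projection x S]
    simp only [sq, Mx_decomp]
    rw [norm_add_sq_eq_norm_sq_add_norm_sq_of_inner_eq_zero (L (p1 x)) (L3 (p2 x)) Mx_orth]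
    simp only [p1, p2, LinearIsometry.norm_map, _root_.add_left_inj, mul_eq_mul_left_iff,
      norm_eq_zero, eq_self_iff_true, ContinuousLinearMap.coe_coe, Submodule.coe_norm,
      Submodule.coe_eq_zero]
  refine ⟨⟨M, M_norm_map⟩, fun s => ?_⟩
  have hp1 : p1 s = s := Submodule.orthogonalProjectionOnto_mem_subspace_eq_self s
  have hp2 : p2 (s : V) = 0 := by
    simp only [p2, ContinuousLinearMap.coe_coe]
    exact Submodule.orthogonalProjectionOnto_apply_of_mem_orthogonal
      (Submodule.le_orthogonal_orthogonal S s.2)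
  show L (p1 (s : V)) + L3 (p2 (s : V)) = L s
  rw [hp1, hp2, map_zero, add_zero]

lemma aux_polar {V W : Type*} [NormedAddCommGroup V] [InnerProductSpace ℂ V]
    [FiniteDimensional ℂ V] [NormedAddCommGroup W] [InnerProductSpace ℂ W]
    [FiniteDimensional ℂ W] (hdim : finrank ℂ V ≤ finrank ℂ W) (g : V →L[ℂ] W) :
    ∃ α : V →L[ℂ] V, α.IsPositive ∧ ∃ θ : V →L[ℂ] W, (∀ v, ‖θ v‖ = ‖v‖) ∧ θ ∘L α = g := by
  classical
  haveI : CompleteSpace V := FiniteDimensional.complete ℂ V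
  haveI : CompleteSpace W := FiniteDimensional.complete ℂ W
  set a : V →L[ℂ] V := adjoint g ∘L g with ha_def
  have ha : a.IsPositive := by
    have h := (isPositive_one (E := W)).adjoint_conj g
    simpa [ha_def] using (show adjoint g ∘L 1 ∘L g = adjoint g ∘L g by ext; simp) ▸ h
  set α := CFC.sqrt a with hα_def
  have hα : α.IsPositive := (nonneg_iff_isPositive _).1 (CFC.sqrt_nonneg _)
  have hsq : α ∘L α = a := CFC.sqrt_mul_sqrt_self a ((nonneg_iff_isPositive a).2 ha)
  have key : ∀ v, ‖α v‖ = ‖g v‖ := by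
    intro v
    have hadj : adjoint α = α := hα.isSelfAdjoint
    have h1 : (inner ℂ (α v) (α v) : ℂ) = inner ℂ (g v) (g v) := by
      calc (inner ℂ (α v) (α v) : ℂ) = inner ℂ (adjoint α (α v)) v := by
            rw [adjoint_inner_left]
        _ = inner ℂ ((α ∘L α) v) v := by rw [hadj]; rfl
        _ = inner ℂ (adjoint g (g v)) v := by rw [hsq]; rfl
        _ = inner ℂ (g v) (g v) := by rw [adjoint_inner_left]
    have h3 : (‖α v‖ : ℝ) ^ 2 = (‖g v‖ : ℝ) ^ 2 := by
      rw [← inner_self_eq_norm_sq (𝕜 := ℂ), ← inner_self_eq_norm_sq (𝕜 := ℂ), h1]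
    nlinarith [norm_nonneg (α v), norm_nonneg (g v)]
  set A : V →ₗ[ℂ] V := (α : V →ₗ[ℂ] V) with hA_def
  set G : V →ₗ[ℂ] W := (g : V →ₗ[ℂ] W) with hG_def
  have hker : LinearMap.ker A ≤ LinearMap.ker G := by
    intro v hv
    have h0 : α v = 0 := hv
    have : ‖g v‖ = 0 := by rw [← key v, h0, norm_zero]
    simpa [LinearMap.mem_ker, hG_def] using norm_eq_zero.mp this
  let φ : LinearMap.range A →ₗ[ℂ] W :=
    (Submodule.liftQ (LinearMap.ker A) G hker).comp
      (A.quotKerEquivRange).symm.toLinearMap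
  have hφ : ∀ v : V, φ ⟨A v, LinearMap.mem_range_self A v⟩ = G v := by
    intro v
    have hs : (A.quotKerEquivRange).symm ⟨A v, LinearMap.mem_range_self A v⟩ =
        Submodule.Quotient.mk v := by
      rw [LinearEquiv.symm_apply_eq]
      exact Subtype.ext (A.quotKerEquivRange_apply_mk v).symm
    simp only [φ, LinearMap.comp_apply, LinearEquiv.coe_toLinearMap, hs,
      Submodule.liftQ_apply]
  have hnorm : ∀ s : LinearMap.range A, ‖φ s‖ = ‖s‖ := by
    rintro ⟨-, v, rfl⟩
    rw [hφ v]
    show ‖G v‖ = ‖A v‖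
    rw [show ‖G v‖ = ‖g v‖ from rfl, show ‖A v‖ = ‖α v‖ from rfl, key v]
  obtain ⟨θ', hθ'⟩ := aux_extend hdim (LinearMap.range A) ⟨φ, hnorm⟩
  refine ⟨α, hα, θ'.toContinuousLinearMap, fun v => θ'.norm_map v, ?_⟩
  ext v
  have h5 := hθ' ⟨A v, LinearMap.mem_range_self A v⟩
  simp only [LinearIsometry.coe_mk] at h5
  show θ' (α v) = g v
  rw [show α v = ((⟨A v, LinearMap.mem_range_self A v⟩ : LinearMap.range A) : V) from rfl,
    h5, hφ v]
  rfl

/-- Let `V`, `W` be Hermitian spaces with `dim V ≤ dim W`.  The map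
`μ' : s₊(V) × 𝓛(V,W) → Hom_ℂ(V,W)`, `(α, θ) ↦ −θ ∘ α`, is a continuous proper
surjection.  Here `s₊(V)` is the space of positive semidefinite self-adjoint endomorphisms
of `V` and `𝓛(V,W)` the space of complex linear isometries `V → W`. -/
theorem miller_stmt10 {V W : Type*} [NormedAddCommGroup V] [InnerProductSpace ℂ V]
    [FiniteDimensional ℂ V] [NormedAddCommGroup W] [InnerProductSpace ℂ W]
    [FiniteDimensional ℂ W] (hdim : Module.finrank ℂ V ≤ Module.finrank ℂ W) :
    Continuous (fun p : {α : V →L[ℂ] V // α.IsPositive} × {θ : V →L[ℂ] W // ∀ v, ‖θ v‖ = ‖v‖}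
        => -((p.2 : V →L[ℂ] W) ∘L (p.1 : V →L[ℂ] V))) ∧
    Function.Surjective
      (fun p : {α : V →L[ℂ] V // α.IsPositive} × {θ : V →L[ℂ] W // ∀ v, ‖θ v‖ = ‖v‖}
        => -((p.2 : V →L[ℂ] W) ∘L (p.1 : V →L[ℂ] V))) ∧
    ∀ K : Set (V →L[ℂ] W), IsCompact K →
      IsCompact ((fun p : {α : V →L[ℂ] V // α.IsPositive} ×
          {θ : V →L[ℂ] W // ∀ v, ‖θ v‖ = ‖v‖}
        => -((p.2 : V →L[ℂ] W) ∘L (p.1 : V →L[ℂ] V))) ⁻¹' K) := by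
  classical
  haveI : CompleteSpace V := FiniteDimensional.complete ℂ V
  haveI : CompleteSpace W := FiniteDimensional.complete ℂ W
  have hcomp : Continuous fun q : (V →L[ℂ] V) × (V →L[ℂ] W) => -(q.2 ∘L q.1) := by
    have h1 : Continuous fun q : (V →L[ℂ] W) × (V →L[ℂ] V) => q.1.comp q.2 :=
      isBoundedBilinearMap_comp.continuous
    exact (h1.comp (continuous_snd.prodMk continuous_fst)).neg
  have hcont : Continuous (fun p : {α : V →L[ℂ] V // α.IsPositive} ×
      {θ : V →L[ℂ] W // ∀ v, ‖θ v‖ = ‖v‖}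
      => -((p.2 : V →L[ℂ] W) ∘L (p.1 : V →L[ℂ] V))) :=
    hcomp.comp ((continuous_subtype_val.comp continuous_fst).prodMk
      (continuous_subtype_val.comp continuous_snd))
  refine ⟨hcont, ?_, ?_⟩
  · -- surjectivity
    intro f
    obtain ⟨α, hα, θ, hθ, hce⟩ := aux_polar hdim (-f)
    exact ⟨(⟨α, hα⟩, ⟨θ, hθ⟩), by simp only; rw [hce, neg_neg]⟩
  · -- properness
    intro K hK
    haveI : ProperSpace (V →L[ℂ] V) := FiniteDimensional.proper ℂ _
    haveI : ProperSpace (V →L[ℂ] W) := FiniteDimensional.proper ℂ _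
    set D : Set ((V →L[ℂ] V) × (V →L[ℂ] W)) :=
      {q | q.1.IsPositive ∧ (∀ v, ‖q.2 v‖ = ‖v‖) ∧ -(q.2 ∘L q.1) ∈ K} with hD_def
    have hDclosed : IsClosed D := by
      have hc1 : IsClosed {q : (V →L[ℂ] V) × (V →L[ℂ] W) | q.1.IsPositive} := by
        have : {q : (V →L[ℂ] V) × (V →L[ℂ] W) | q.1.IsPositive} =
            {q | adjoint q.1 = q.1} ∩ ⋂ x : V, {q | 0 ≤ q.1.reApplyInnerSelf x} := by
          ext q
          simp only [Set.mem_setOf_eq, Set.mem_inter_iff, Set.mem_iInter,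
            ContinuousLinearMap.IsPositive, ← ContinuousLinearMap.isSelfAdjoint_iff_isSymmetric,
            isSelfAdjoint_iff']
        rw [this]
        refine IsClosed.inter ?_ (isClosed_iInter fun x => ?_)
        · exact isClosed_eq
            ((ContinuousLinearMap.adjoint (E := V) (F := V)).continuous.comp continuous_fst)
            continuous_fst
        · refine isClosed_le continuous_const ?_
          have happ : Continuous fun q : (V →L[ℂ] V) × (V →L[ℂ] W) => q.1 x :=
            ((ContinuousLinearMap.apply ℂ V x).continuous).comp continuous_fst
          exact (Complex.continuous_re.comp (happ.inner continuous_const))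
      have hc2 : IsClosed {q : (V →L[ℂ] V) × (V →L[ℂ] W) | ∀ v, ‖q.2 v‖ = ‖v‖} := by
        have : {q : (V →L[ℂ] V) × (V →L[ℂ] W) | ∀ v, ‖q.2 v‖ = ‖v‖} =
            ⋂ v : V, {q | ‖q.2 v‖ = ‖v‖} := by ext q; simp
        rw [this]
        refine isClosed_iInter fun v => isClosed_eq ?_ continuous_const
        exact (((ContinuousLinearMap.apply ℂ W v).continuous).comp continuous_snd).norm
      have hc3 : IsClosed {q : (V →L[ℂ] V) × (V →L[ℂ] W) | -(q.2 ∘L q.1) ∈ K} :=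
        hK.isClosed.preimage hcomp
      exact hc1.inter (hc2.inter hc3)
    have hDbounded : Bornology.IsBounded D := by
      obtain ⟨R, hR⟩ := hK.isBounded.subset_closedBall 0
      refine ((Metric.isBounded_closedBall (x := (0 : V →L[ℂ] V)) (r := R)).prod (Metric.isBounded_closedBall (x := (0 : V →L[ℂ] W)) (r := 1))).subset ?_
      rintro ⟨a, t⟩ ⟨ha, ht, hk⟩
      have hnorm_eq : ‖t ∘L a‖ = ‖a‖ := by
        refine le_antisymm (opNorm_le_bound _ (norm_nonneg a) fun v => ?_)
          (opNorm_le_bound _ (norm_nonneg _) fun v => ?_)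
        · rw [comp_apply, ht (a v)]
          exact a.le_opNorm v
        · rw [← ht (a v), ← comp_apply]
          exact (t ∘L a).le_opNorm v
      constructor
      · simp only [Metric.mem_closedBall, dist_zero_right]
        have := hR hk
        simp only [Metric.mem_closedBall, dist_zero_right, norm_neg] at this
        rw [← hnorm_eq]
        exact this
      · simp only [Metric.mem_closedBall, dist_zero_right]
        exact opNorm_le_bound _ zero_le_one fun v => by rw [ht v, one_mul]
    have hDcompact : IsCompact D := Metric.isCompact_of_isClosed_isBounded hDclosed hDbounded
    have hemb : Topology.IsEmbedding (fun p : {α : V →L[ℂ] V // α.IsPositive} ×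
        {θ : V →L[ℂ] W // ∀ v, ‖θ v‖ = ‖v‖} => ((p.1 : V →L[ℂ] V), (p.2 : V →L[ℂ] W))) :=
      Topology.IsEmbedding.subtypeVal.prodMap Topology.IsEmbedding.subtypeVal
    rw [hemb.isCompact_iff]
    convert hDcompact using 1
    ext ⟨a, t⟩
    constructor
    · rintro ⟨⟨p1, p2⟩, hp, heq⟩
      obtain ⟨h1, h2⟩ := Prod.mk.injEq _ _ _ _ ▸ heq
      subst h1; subst h2
      exact ⟨p1.2, p2.2, hp⟩
    · rintro ⟨ha, ht, hk⟩
      exact ⟨(⟨a, ha⟩, ⟨t, ht⟩), hk, rfl⟩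
end

section
/- Let V and W be Hermitian spaces with dim V = d ≤ dim W, and let f : D'_+(d) → D'_+(d) be a continuous facial map. Let A_f : s_+(V) → s_+(V) be the associated functional-calculus map: if (v_0,…,v_{d−1}) is an orthonormal eigenbasis of α ∈ s_+(V) with eigenvalues e_0(α) ≤ … ≤ e_{d−1}(α) and f(e_0(α),…,e_{d−1}(α)) = (s_0,…,s_{d−1}), then A_f(α)v_i = s_i v_i. Then there exists exactly one map B_f : Hom_ℂ(V,W) → Hom_ℂ(V,W) satisfying B_f(−θ ∘ α) = −θ ∘ A_f(α) for all α ∈ s_+(V) and θ ∈ 𝓛(V,W); moreover B_f is continuous and satisfies ρ ∘ B_f = A_f ∘ ρ, where ρ(γ) := (γ†γ)^{1/2}. -/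
open ContinuousLinearMap Filter

section aux

variable {V : Type*} [NormedAddCommGroup V] [InnerProductSpace ℂ V] [FiniteDimensional ℂ V]
variable {W : Type*} [NormedAddCommGroup W] [InnerProductSpace ℂ W] [FiniteDimensional ℂ W]

local notation "⟪" x ", " y "⟫" => @inner ℂ _ _ x y

omit [FiniteDimensional ℂ V] in
lemma miller_ext {d : ℕ} (v : OrthonormalBasis (Fin d) ℂ V) {T S : V →L[ℂ] W}
    (h : ∀ i, T (v i) = S (v i)) : T = S := by
  apply ContinuousLinearMap.coe_injective
  apply Module.Basis.ext v.toBasis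
  intro i
  simpa using h i

lemma miller_eigen {d : ℕ} (hd : Module.finrank ℂ V = d) {α : V →L[ℂ] V} (hα : α.IsPositive) :
    ∃ (v : OrthonormalBasis (Fin d) ℂ V) (t : Fin d → ℝ),
      Monotone t ∧ (∀ i, 0 ≤ t i) ∧ ∀ i, α (v i) = (t i : ℂ) • v i := by
  have hsym : (α : V →ₗ[ℂ] V).IsSymmetric := hα.1
  set t₀ := hsym.eigenvalues hd with ht₀
  set σ := Tuple.sort t₀ with hσ
  refine ⟨(hsym.eigenvectorBasis hd).reindex σ.symm, t₀ ∘ σ, Tuple.monotone_sort t₀, ?_, ?_⟩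
  · intro i
    have h1 := hsym.apply_eigenvectorBasis hd (σ i)
    have h2 := hα.inner_nonneg_left (hsym.eigenvectorBasis hd (σ i))
    rw [ContinuousLinearMap.coe_coe] at h1
    rw [h1] at h2
    rw [inner_smul_left, inner_self_eq_norm_sq_to_K] at h2
    have hn : ‖hsym.eigenvectorBasis hd (σ i)‖ = 1 :=
      (hsym.eigenvectorBasis hd).orthonormal.1 (σ i)
    simp [hn] at h2
    exact h2
  · intro i
    have h1 := hsym.apply_eigenvectorBasis hd (σ i)
    rw [ContinuousLinearMap.coe_coe] at h1
    simpa [OrthonormalBasis.reindex_apply] using h1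


noncomputable def millerDiag {d : ℕ} (v : Fin d → V) (s : Fin d → ℝ) : V →L[ℂ] V :=
  ∑ i, (s i : ℂ) • ((innerSL ℂ (v i)).smulRight (v i))

omit [FiniteDimensional ℂ V] in
lemma millerDiag_apply {d : ℕ} (v : Fin d → V) (s : Fin d → ℝ) (x : V) :
    millerDiag v s x = ∑ i, (s i : ℂ) • (⟪v i, x⟫ • v i) := by
  simp [millerDiag, ContinuousLinearMap.sum_apply]

omit [FiniteDimensional ℂ V] in
lemma millerDiag_basis {d : ℕ} {v : Fin d → V} (hv : Orthonormal ℂ v) (s : Fin d → ℝ)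
    (j : Fin d) : millerDiag v s (v j) = (s j : ℂ) • v j := by
  rw [millerDiag_apply, Finset.sum_eq_single j]
  · rw [orthonormal_iff_ite.mp hv j j]; simp
  · intro i _ hij
    rw [orthonormal_iff_ite.mp hv i j]
    simp [hij]
  · simp

lemma millerDiag_pos {d : ℕ} (v : Fin d → V) {s : Fin d → ℝ} (hs : ∀ i, 0 ≤ s i) :
    (millerDiag v s).IsPositive := by
  constructor
  · intro x y
    simp only [ContinuousLinearMap.coe_coe, millerDiag_apply, sum_inner, inner_sum]
    congr 1; funext i
    rw [inner_smul_left, inner_smul_right, inner_smul_left, inner_smul_right,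
      Complex.conj_ofReal, ← inner_conj_symm x (v i)]
    ring
  · intro x
    have : millerDiag v s x = ∑ i, (s i : ℂ) • (⟪v i, x⟫ • v i) := millerDiag_apply v s x
    rw [ContinuousLinearMap.reApplyInnerSelf_apply, this, sum_inner, map_sum]
    apply Finset.sum_nonneg
    intro i _
    rw [inner_smul_left, inner_smul_left, Complex.conj_ofReal]
    have : (s i : ℂ) * ((starRingEnd ℂ) ⟪v i, x⟫ * ⟪v i, x⟫) =
        ((s i * Complex.normSq ⟪v i, x⟫ : ℝ) : ℂ) := by
      rw [Complex.ofReal_mul, Complex.normSq_eq_conj_mul_self]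
    rw [this]
    simpa using mul_nonneg (hs i) (Complex.normSq_nonneg _)

omit [FiniteDimensional ℂ V] in
lemma millerDiag_continuous {d : ℕ} :
    Continuous (fun p : (Fin d → V) × (Fin d → ℝ) => millerDiag p.1 p.2) := by
  unfold millerDiag
  apply continuous_finset_sum
  intro i _
  apply Continuous.fun_smul
  · exact Complex.continuous_ofReal.comp ((continuous_apply i).comp continuous_snd)
  · have h1 : Continuous (fun p : (Fin d → V) × (Fin d → ℝ) => (innerSL ℂ (p.1 i))) :=
      (innerSL ℂ).continuous.comp ((continuous_apply i).comp continuous_fst)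
    have h2 : Continuous (fun p : (Fin d → V) × (Fin d → ℝ) => p.1 i) :=
      (continuous_apply i).comp continuous_fst
    exact isBoundedBilinearMap_smulRight.continuous.comp (h1.prodMk h2)

lemma miller_norm_eq {γ : V →L[ℂ] W} {α : V →L[ℂ] V} (hα : α.IsPositive)
    (h : α ∘L α = adjoint γ ∘L γ) (x : V) : ‖α x‖ = ‖γ x‖ := by
  have hsym := hα.1
  have h1 : ⟪α x, α x⟫ = ⟪γ x, γ x⟫ := by
    calc ⟪α x, α x⟫ = ⟪x, α (α x)⟫ := hsym x (α x)
    _ = ⟪x, (adjoint γ ∘L γ) x⟫ := by rw [← ContinuousLinearMap.comp_apply, h]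
    _ = ⟪γ x, γ x⟫ := by rw [ContinuousLinearMap.comp_apply, adjoint_inner_right]
  have h2 : ‖α x‖ ^ 2 = ‖γ x‖ ^ 2 := by
    rw [← inner_self_eq_norm_sq (𝕜 := ℂ), ← inner_self_eq_norm_sq (𝕜 := ℂ), h1]
  nlinarith [norm_nonneg (α x), norm_nonneg (γ x)]

lemma miller_sqrt_unique {r r' : V →L[ℂ] V} (hr : r.IsPositive) (hr' : r'.IsPositive)
    (h : r ∘L r = r' ∘L r') : r = r' := by
  obtain ⟨v, t, -, htp, hvt⟩ := miller_eigen rfl hr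
  refine miller_ext v fun i => ?_
  have hsq : r' (r' (v i)) = ((t i : ℂ) * (t i : ℂ)) • v i := by
    have : (r' ∘L r') (v i) = (r ∘L r) (v i) := by rw [h]
    simp only [ContinuousLinearMap.comp_apply, hvt, map_smul] at this ⊢
    rw [this, smul_smul]
  rw [hvt]
  have hsym' := hr'.1
  rcases (htp i).eq_or_lt with h0 | hpos
  · have hz : ⟪r' (v i), r' (v i)⟫ = 0 := by
      have h5 := (hsym' (v i) (r' (v i))).symm
      simp only [ContinuousLinearMap.coe_coe] at h5
      rw [← h5, hsq, ← h0]
      simp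
    rw [inner_self_eq_zero.mp hz, ← h0]
    simp
  · set w := r' (v i) - (t i : ℂ) • v i with hw_def
    have hw : r' w = (-(t i) : ℂ) • w := by
      rw [hw_def, map_sub, map_smul, hsq]
      module
    have h2 := hr'.inner_nonneg_left w
    rw [hw, inner_smul_left, inner_self_eq_norm_sq_to_K] at h2
    have h3 : (0:ℝ) ≤ -(t i) * ‖w‖ ^ 2 := by
      simpa [← Complex.ofReal_pow, ← Complex.ofReal_mul, ← Complex.ofReal_neg,
        Complex.zero_le_real] using h2
    have hw0 : w = 0 := by
      have h5 : ‖w‖ ^ 2 = 0 := le_antisymm (by nlinarith) (sq_nonneg _)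
      have h4 : ‖w‖ = 0 := pow_eq_zero_iff two_ne_zero |>.mp h5
      simpa using h4
    have : r' (v i) = (t i : ℂ) • v i := by
      rw [sub_eq_zero] at hw0
      exact hw0
    rw [this]
end aux

section aux2

variable {V : Type*} [NormedAddCommGroup V] [InnerProductSpace ℂ V] [FiniteDimensional ℂ V]
variable {W : Type*} [NormedAddCommGroup W] [InnerProductSpace ℂ W] [FiniteDimensional ℂ W]

local notation "⟪" x ", " y "⟫" => @inner ℂ _ _ x y

omit [FiniteDimensional ℂ V] [FiniteDimensional ℂ W] in
lemma miller_isometry_adjoint [CompleteSpace V] [CompleteSpace W] {θ : V →L[ℂ] W}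
    (hθ : ∀ v, ‖θ v‖ = ‖v‖) : adjoint θ ∘L θ = ContinuousLinearMap.id ℂ V := by
  ext x
  apply ext_inner_right ℂ
  intro y
  rw [ContinuousLinearMap.comp_apply, adjoint_inner_left]
  have h := LinearIsometry.inner_map_map ⟨(θ : V →ₗ[ℂ] W), hθ⟩ x y
  simpa using h

omit [FiniteDimensional ℂ W] in
lemma miller_isometry_of_orthonormal {d : ℕ} (v : OrthonormalBasis (Fin d) ℂ V)
    {w : Fin d → W} (hw : Orthonormal ℂ w) (x : V) :
    ‖LinearMap.toContinuousLinearMap (v.toBasis.constr ℂ w) x‖ = ‖x‖ := by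
  set T := LinearMap.toContinuousLinearMap (v.toBasis.constr ℂ w) with hT
  have hTb : ∀ i, T (v i) = w i := by
    intro i
    have : T (v.toBasis i) = w i := v.toBasis.constr_basis ℂ w i
    simpa using this
  have hx : x = ∑ i, v.repr x i • v i := (v.sum_repr x).symm
  have hTx : T x = ∑ i, v.repr x i • w i := by
    conv_lhs => rw [hx]
    rw [map_sum]
    exact Finset.sum_congr rfl fun i _ => by rw [map_smul, hTb i]
  have h1 : ⟪T x, T x⟫ = ∑ i, (starRingEnd ℂ) (v.repr x i) * (v.repr x i) := by
    rw [hTx, hw.inner_sum]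
  have h2 : ⟪x, x⟫ = ∑ i, (starRingEnd ℂ) (v.repr x i) * (v.repr x i) := by
    conv_lhs => rw [hx]
    rw [v.orthonormal.inner_sum]
  have h3 : ‖T x‖ ^ 2 = ‖x‖ ^ 2 := by
    rw [← inner_self_eq_norm_sq (𝕜 := ℂ), ← inner_self_eq_norm_sq (𝕜 := ℂ), h1, h2]
  nlinarith [norm_nonneg (T x), norm_nonneg x]

lemma miller_polar {d : ℕ} (hd : Module.finrank ℂ V = d)
    (hdim : Module.finrank ℂ V ≤ Module.finrank ℂ W) (γ : V →L[ℂ] W) :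
    ∃ (θ : V →L[ℂ] W) (α : V →L[ℂ] V), (∀ x, ‖θ x‖ = ‖x‖) ∧ α.IsPositive ∧
      θ ∘L α = γ ∧ α ∘L α = adjoint γ ∘L γ := by
  classical
  have hβpos : (adjoint γ ∘L γ).IsPositive := by
    constructor
    · rw [← isSelfAdjoint_iff_isSymmetric, IsSelfAdjoint, star_eq_adjoint, adjoint_comp, adjoint_adjoint]
    · intro x
      rw [ContinuousLinearMap.reApplyInnerSelf_apply, ContinuousLinearMap.comp_apply,
        adjoint_inner_left, inner_self_eq_norm_sq]
      positivity
  obtain ⟨v, t, hmono, htp, hvt⟩ := miller_eigen hd hβpos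
  set α := millerDiag (⇑v) (fun i => Real.sqrt (t i)) with hαdef
  have hαpos : α.IsPositive := millerDiag_pos ⇑v (fun i => Real.sqrt_nonneg (t i))
  have hαv : ∀ i, α (v i) = ((Real.sqrt (t i) : ℝ) : ℂ) • v i :=
    fun i => millerDiag_basis v.orthonormal _ i
  have hαsq : α ∘L α = adjoint γ ∘L γ := by
    refine miller_ext v fun i => ?_
    rw [ContinuousLinearMap.comp_apply, hαv i, map_smul, hαv i, smul_smul, hvt i,
      ← Complex.ofReal_mul, Real.mul_self_sqrt (htp i)]
  have hker : ∀ i, t i = 0 → γ (v i) = 0 := by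
    intro i h0
    have h1 : ‖α (v i)‖ = ‖γ (v i)‖ := miller_norm_eq hαpos hαsq (v i)
    rw [hαv i, h0] at h1
    simp only [Real.sqrt_zero, Complex.ofReal_zero, zero_smul, norm_zero] at h1
    exact norm_eq_zero.mp h1.symm
  have hinner : ∀ i j, ⟪γ (v i), γ (v j)⟫ = if i = j then (t j : ℂ) else 0 := by
    intro i j
    rw [← ContinuousLinearMap.adjoint_inner_right γ (v i) (γ (v j)),
      ← ContinuousLinearMap.comp_apply, hvt j, inner_smul_right,
      orthonormal_iff_ite.mp v.orthonormal i j]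
    by_cases h : i = j <;> simp [h]
  -- the orthonormal family on the support of t
  set p : Fin d → Prop := fun i => t i = 0 with hp
  set u : {i // ¬ p i} → W := fun i => (((Real.sqrt (t i.1))⁻¹ : ℝ) : ℂ) • γ (v i.1)
    with hu_def
  have hu : Orthonormal ℂ u := by
    rw [orthonormal_iff_ite]
    intro i j
    rw [hu_def]
    simp only
    rw [inner_smul_left, inner_smul_right, hinner i.1 j.1, Complex.conj_ofReal]
    by_cases h : i = j
    · subst h
      have ht0 : t i.1 ≠ 0 := i.2
      simp only [if_pos rfl, if_true]
      norm_cast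
      rw [← mul_assoc, ← mul_inv, Real.mul_self_sqrt (htp i.1), inv_mul_cancel₀ ht0]
    · have hij : (i : Fin d) ≠ (j : Fin d) := fun hc => h (Subtype.ext hc)
      rw [if_neg hij, if_neg h]
      simp
  -- dimension count and embedding into the orthogonal complement
  set U := Submodule.span ℂ (Set.range u) with hU
  have hrankU : Module.finrank ℂ ↥U = Fintype.card {i // ¬ p i} :=
    finrank_span_eq_card hu.linearIndependent
  have hcard : Fintype.card {i // p i} ≤ Module.finrank ℂ ↥Uᗮ := by
    have h1 := Submodule.finrank_add_finrank_orthogonal U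
    have h2 : Fintype.card {i // p i} + Fintype.card {i // ¬ p i} = d := by
      rw [Fintype.card_subtype_compl]
      have := Fintype.card_subtype_le p
      simp only [Fintype.card_fin] at this ⊢
      omega
    have h3 : d ≤ Module.finrank ℂ W := hd ▸ hdim
    rw [hrankU] at h1
    omega
  obtain ⟨e⟩ : Nonempty ({i // p i} ↪ Fin (Module.finrank ℂ ↥Uᗮ)) := by
    apply Function.Embedding.nonempty_of_card_le
    simpa using hcard
  set b := stdOrthonormalBasis ℂ ↥Uᗮ with hb
  set w : Fin d → W := fun i => if h : p i then ((b (e ⟨i, h⟩) : ↥Uᗮ) : W) else u ⟨i, h⟩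
    with hw_def
  have hmemU : ∀ (j : {i // ¬ p i}), u j ∈ U := fun j =>
    Submodule.subset_span (Set.mem_range_self j)
  have hw : Orthonormal ℂ w := by
    rw [orthonormal_iff_ite]
    intro i j
    rw [hw_def]
    simp only
    by_cases hi : p i <;> by_cases hj : p j
    · rw [dif_pos hi, dif_pos hj, ← Submodule.coe_inner,
        orthonormal_iff_ite.mp (b.orthonormal) _ _]
      by_cases hij : i = j
      · subst hij; simp
      · have : e ⟨i, hi⟩ ≠ e ⟨j, hj⟩ := fun hc => hij (congrArg Subtype.val (e.injective hc))
        rw [if_neg this, if_neg hij]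
    · rw [dif_pos hi, dif_neg hj]
      have h0 : ⟪u ⟨j, hj⟩, ((b (e ⟨i, hi⟩) : ↥Uᗮ) : W)⟫ = 0 :=
        (Submodule.mem_orthogonal U _).mp (b (e ⟨i, hi⟩)).2 _ (hmemU ⟨j, hj⟩)
      rw [← inner_conj_symm, h0, map_zero, if_neg (fun hc : i = j => hj (hc ▸ hi))]
    · rw [dif_neg hi, dif_pos hj]
      rw [(Submodule.mem_orthogonal U _).mp (b (e ⟨j, hj⟩)).2 _ (hmemU ⟨i, hi⟩),
        if_neg (fun hc : i = j => hi (hc ▸ hj))]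
    · rw [dif_neg hi, dif_neg hj, orthonormal_iff_ite.mp hu _ _]
      by_cases hij : i = j
      · subst hij; simp
      · rw [if_neg (fun hc => hij (congrArg Subtype.val hc)), if_neg hij]
  -- the isometry
  set θ := LinearMap.toContinuousLinearMap (v.toBasis.constr ℂ w) with hθdef
  have hθiso : ∀ x, ‖θ x‖ = ‖x‖ := miller_isometry_of_orthonormal v hw
  have hθb : ∀ i, θ (v i) = w i := by
    intro i
    have : θ (v.toBasis i) = w i := v.toBasis.constr_basis ℂ w i
    simpa using this
  refine ⟨θ, α, hθiso, hαpos, ?_, hαsq⟩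
  refine miller_ext v fun i => ?_
  rw [ContinuousLinearMap.comp_apply, hαv i, map_smul, hθb i, hw_def]
  by_cases hi : p i
  · simp only [dif_pos hi]
    have h0 : t i = 0 := hi
    rw [h0, hker i h0]
    simp
  · simp only [dif_neg hi, hu_def]
    rw [smul_smul, ← Complex.ofReal_mul,
      mul_inv_cancel₀ (Real.sqrt_ne_zero'.mpr (lt_of_le_of_ne (htp i) (Ne.symm hi)))]
    simp

end aux2

open ContinuousLinearMap

set_option maxHeartbeats 2000000 in
/-- Let `V`, `W` be Hermitian spaces with `dim V = d ≤ dim W`, let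
`f : D'₊(d) → D'₊(d)` be a continuous facial map, and let `A = A_f : s₊(V) → s₊(V)` be the
associated functional-calculus map (characterized on orthonormal eigenbases).  Then there
is exactly one map `B_f : Hom_ℂ(V,W) → Hom_ℂ(V,W)` with `B_f(−θ ∘ α) = −θ ∘ A_f(α)` for
all `α ∈ s₊(V)` and isometries `θ : V → W`; moreover `B_f` is continuous and satisfies
`ρ ∘ B_f = A_f ∘ ρ`, where `ρ(γ)` is the positive semidefinite square root of `γ†γ`. -/
theorem miller_stmt11 {V W : Type*} [NormedAddCommGroup V] [InnerProductSpace ℂ V]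
    [FiniteDimensional ℂ V] [NormedAddCommGroup W] [InnerProductSpace ℂ W]
    [FiniteDimensional ℂ W] (d : ℕ) (hd : Module.finrank ℂ V = d)
    (hdim : Module.finrank ℂ V ≤ Module.finrank ℂ W)
    (f : {t : Fin d → ℝ // Monotone t ∧ ∀ i, 0 ≤ t i} →
      {t : Fin d → ℝ // Monotone t ∧ ∀ i, 0 ≤ t i})
    (hf : Continuous f)
    (hfacial : ∀ (t : {t : Fin d → ℝ // Monotone t ∧ ∀ i, 0 ≤ t i}) (i j : Fin d),
      (i : ℕ) + 1 = (j : ℕ) → (t : Fin d → ℝ) i = (t : Fin d → ℝ) j →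
      (f t : Fin d → ℝ) i = (f t : Fin d → ℝ) j)
    (hfacial₀ : ∀ (t : {t : Fin d → ℝ // Monotone t ∧ ∀ i, 0 ≤ t i}) (i : Fin d),
      (i : ℕ) = 0 → (t : Fin d → ℝ) i = 0 → (f t : Fin d → ℝ) i = 0)
    (A : {α : V →L[ℂ] V // α.IsPositive} → {α : V →L[ℂ] V // α.IsPositive})
    (hA : ∀ (α : {α : V →L[ℂ] V // α.IsPositive}) (t : Fin d → ℝ) (ht : Monotone t)
      (htp : ∀ i, 0 ≤ t i) (v : OrthonormalBasis (Fin d) ℂ V),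
      (∀ i, (α : V →L[ℂ] V) (v i) = (t i : ℂ) • v i) →
      ∀ i, (A α : V →L[ℂ] V) (v i) = (((f ⟨t, ht, htp⟩ : Fin d → ℝ) i : ℂ)) • v i) :
    ∃! B : (V →L[ℂ] W) → (V →L[ℂ] W),
      (∀ (α : {α : V →L[ℂ] V // α.IsPositive}) (θ : {θ : V →L[ℂ] W // ∀ v, ‖θ v‖ = ‖v‖}),
        B (-((θ : V →L[ℂ] W) ∘L (α : V →L[ℂ] V))) =
          -((θ : V →L[ℂ] W) ∘L (A α : V →L[ℂ] V))) ∧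
      Continuous B ∧
      ∀ (γ : V →L[ℂ] W) (r r' : V →L[ℂ] V) (hr : r.IsPositive),
        r ∘L r = ContinuousLinearMap.adjoint γ ∘L γ →
        r'.IsPositive → r' ∘L r' = ContinuousLinearMap.adjoint (B γ) ∘L (B γ) →
        r' = (A ⟨r, hr⟩ : V →L[ℂ] V) := by
  classical
  -- facial chain: zero eigenvalues map to zero
  have hzero : ∀ (τ : {t : Fin d → ℝ // Monotone t ∧ ∀ i, 0 ≤ t i}) (i : Fin d),
      (τ : Fin d → ℝ) i = 0 → (f τ : Fin d → ℝ) i = 0 := by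
    intro τ i
    have key : ∀ n (hn : n < d), (τ : Fin d → ℝ) ⟨n, hn⟩ = 0 →
        (f τ : Fin d → ℝ) ⟨n, hn⟩ = 0 := by
      intro n
      induction n with
      | zero => exact fun hn hi => hfacial₀ τ ⟨0, hn⟩ rfl hi
      | succ m ih =>
        intro hn hi
        have hm : m < d := Nat.lt_of_succ_lt hn
        have hle : (⟨m, hm⟩ : Fin d) ≤ ⟨m + 1, hn⟩ := by
          simp [Fin.le_def]
        have hτm : (τ : Fin d → ℝ) ⟨m, hm⟩ = 0 :=
          le_antisymm (le_of_le_of_eq (τ.2.1 hle) hi) (τ.2.2 ⟨m, hm⟩)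
        have h4 := hfacial τ ⟨m, hm⟩ ⟨m + 1, hn⟩ rfl (by rw [hτm, hi])
        rw [← h4]
        exact ih hm hτm
    intro hi
    have := key i.1 i.2 (by simpa using hi)
    simpa using this
  -- polar decompositions
  choose θo αo hθo hαo hθαo hαsqo using fun γ : V →L[ℂ] W => miller_polar hd hdim γ
  set B : (V →L[ℂ] W) → (V →L[ℂ] W) :=
    fun γ => θo γ ∘L (A ⟨αo γ, hαo γ⟩ : V →L[ℂ] V) with hB
  -- well-definedness
  have hwd : ∀ (α : V →L[ℂ] V) (hα : α.IsPositive) (θ θ' : V →L[ℂ] W),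
      (∀ x, ‖θ x‖ = ‖x‖) → (∀ x, ‖θ' x‖ = ‖x‖) → θ ∘L α = θ' ∘L α →
      θ ∘L (A ⟨α, hα⟩ : V →L[ℂ] V) = θ' ∘L (A ⟨α, hα⟩ : V →L[ℂ] V) := by
    intro α hα θ θ' hθ hθ' hcomp
    obtain ⟨v, t, hmono, htp, hvt⟩ := miller_eigen hd hα
    have hAv := hA ⟨α, hα⟩ t hmono htp v hvt
    refine miller_ext v fun i => ?_
    rw [ContinuousLinearMap.comp_apply, ContinuousLinearMap.comp_apply, hAv i,
      map_smul, map_smul]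
    by_cases hs : (f ⟨t, hmono, htp⟩ : Fin d → ℝ) i = 0
    · rw [hs]; simp
    · have hti : t i ≠ 0 := fun h0 => hs (hzero ⟨t, hmono, htp⟩ i h0)
      have h1 : θ (α (v i)) = θ' (α (v i)) := by
        rw [← ContinuousLinearMap.comp_apply, ← ContinuousLinearMap.comp_apply, hcomp]
      rw [hvt i, map_smul, map_smul] at h1
      have h2 : θ (v i) = θ' (v i) :=
        smul_right_injective W (Complex.ofReal_ne_zero.mpr hti) h1
      rw [h2]
  -- B satisfies property (1)
  have hprop1 : ∀ (α : {α : V →L[ℂ] V // α.IsPositive})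
      (θ : {θ : V →L[ℂ] W // ∀ v, ‖θ v‖ = ‖v‖}),
      B (-((θ : V →L[ℂ] W) ∘L (α : V →L[ℂ] V))) =
        -((θ : V →L[ℂ] W) ∘L (A α : V →L[ℂ] V)) := by
    intro α θ
    set γ : V →L[ℂ] W := -((θ : V →L[ℂ] W) ∘L (α : V →L[ℂ] V)) with hγ
    have hsq : (α : V →L[ℂ] V) ∘L (α : V →L[ℂ] V) = adjoint γ ∘L γ := by
      have hadj : adjoint γ = -(adjoint (α : V →L[ℂ] V) ∘L adjoint (θ : V →L[ℂ] W)) := by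
        rw [hγ, map_neg, adjoint_comp]
      rw [hadj, hγ, ContinuousLinearMap.neg_comp, ContinuousLinearMap.comp_neg, neg_neg,
        ContinuousLinearMap.comp_assoc,
        ← ContinuousLinearMap.comp_assoc (adjoint (θ : V →L[ℂ] W)),
        miller_isometry_adjoint θ.2, ContinuousLinearMap.id_comp, α.2.isSelfAdjoint.adjoint_eq]
    have hEq : αo γ = (α : V →L[ℂ] V) :=
      miller_sqrt_unique (hαo γ) α.2 (by rw [hαsqo γ, hsq])
    have hAeq : A ⟨αo γ, hαo γ⟩ = A α := by
      congr 1
      exact Subtype.ext hEq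
    have hneg_iso : ∀ x, ‖(-(θ : V →L[ℂ] W)) x‖ = ‖x‖ := fun x => by
      rw [ContinuousLinearMap.neg_apply, norm_neg]; exact θ.2 x
    have hcomp : θo γ ∘L (α : V →L[ℂ] V) = (-(θ : V →L[ℂ] W)) ∘L (α : V →L[ℂ] V) := by
      have h6 : θo γ ∘L αo γ = (-(θ : V →L[ℂ] W)) ∘L (α : V →L[ℂ] V) := by
        rw [hθαo γ, hγ, ContinuousLinearMap.neg_comp]
      rw [← h6, hEq]
    have h5 := hwd (α : V →L[ℂ] V) α.2 (θo γ) (-(θ : V →L[ℂ] W)) (hθo γ) hneg_iso hcomp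
    calc B γ = θo γ ∘L (A ⟨αo γ, hαo γ⟩ : V →L[ℂ] V) := rfl
    _ = θo γ ∘L (A α : V →L[ℂ] V) := by rw [hAeq]
    _ = (-(θ : V →L[ℂ] W)) ∘L (A α : V →L[ℂ] V) := h5
    _ = -((θ : V →L[ℂ] W) ∘L (A α : V →L[ℂ] V)) := by
        rw [ContinuousLinearMap.neg_comp]
  -- continuity
  have hcont : Continuous B := by
    haveI hVW_proper : ProperSpace (V →L[ℂ] W) := FiniteDimensional.proper ℂ _
    haveI hVV_proper : ProperSpace (V →L[ℂ] V) := FiniteDimensional.proper ℂ _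
    haveI hV_proper : ProperSpace V := FiniteDimensional.proper ℂ V
    rw [continuous_iff_seqContinuous]
    intro u γ₀ hu
    apply Filter.tendsto_of_subseq_tendsto
    intro ns hns
    set u' : ℕ → V →L[ℂ] W := fun n => u (ns n) with hu'def
    have hu' : Filter.Tendsto u' Filter.atTop (nhds γ₀) := hu.comp hns
    obtain ⟨C, hC⟩ := hu'.norm.bddAbove_range
    have hC' : ∀ n, ‖u' n‖ ≤ C := fun n => hC (Set.mem_range_self n)
    have hC0 : (0:ℝ) ≤ C := le_trans (norm_nonneg (u' 0)) (hC' 0)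
    choose v t hmono htp hvt using fun n => miller_eigen hd (hαo (u' n))
    have hαnorm : ∀ n, ‖αo (u' n)‖ ≤ C := by
      intro n
      refine ContinuousLinearMap.opNorm_le_bound _ hC0 fun x => ?_
      rw [miller_norm_eq (hαo (u' n)) (hαsqo (u' n)) x]
      exact le_trans ((u' n).le_opNorm x) (mul_le_mul_of_nonneg_right (hC' n) (norm_nonneg x))
    have hvnorm : ∀ n i, ‖v n i‖ = 1 := fun n i => (v n).orthonormal.1 i
    have ht_bound : ∀ n i, |t n i| ≤ C := by
      intro n i
      have h1 : ‖αo (u' n) (v n i)‖ = |t n i| := by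
        rw [hvt n i, norm_smul, hvnorm n i, Complex.norm_real, Real.norm_eq_abs, mul_one]
      have h2 := (αo (u' n)).le_opNorm (v n i)
      rw [h1, hvnorm n i, mul_one] at h2
      exact le_trans h2 (hαnorm n)
    have hθnorm : ∀ n, ‖θo (u' n)‖ ≤ 1 :=
      fun n => ContinuousLinearMap.opNorm_le_bound _ zero_le_one
        (fun x => by rw [hθo (u' n) x, one_mul])
    set z : ℕ → (V →L[ℂ] W) × (V →L[ℂ] V) × (Fin d → V) × (Fin d → ℝ) :=
      fun n => (θo (u' n), αo (u' n), (fun i => v n i), t n) with hzdef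
    have hKcpt : IsCompact ((Metric.closedBall (0 : V →L[ℂ] W) 1) ×ˢ
        ((Metric.closedBall (0 : V →L[ℂ] V) C) ×ˢ
        ((Metric.closedBall (0 : Fin d → V) 1) ×ˢ (Metric.closedBall (0 : Fin d → ℝ) C)))) :=
      (isCompact_closedBall _ _).prod ((isCompact_closedBall _ _).prod
        ((isCompact_closedBall _ _).prod (isCompact_closedBall _ _)))
    have hzmem : ∀ n, z n ∈ ((Metric.closedBall (0 : V →L[ℂ] W) 1) ×ˢ
        ((Metric.closedBall (0 : V →L[ℂ] V) C) ×ˢ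
        ((Metric.closedBall (0 : Fin d → V) 1) ×ˢ (Metric.closedBall (0 : Fin d → ℝ) C)))) := by
      intro n
      refine ⟨?_, ?_, ?_, ?_⟩
      · rw [Metric.mem_closedBall, dist_zero_right]
        exact hθnorm n
      · rw [Metric.mem_closedBall, dist_zero_right]
        exact hαnorm n
      · rw [Metric.mem_closedBall, dist_zero_right]
        refine (pi_norm_le_iff_of_nonneg zero_le_one).mpr fun i => ?_
        rw [hvnorm n i]
      · rw [Metric.mem_closedBall, dist_zero_right]
        refine (pi_norm_le_iff_of_nonneg hC0).mpr fun i => ?_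
        rw [Real.norm_eq_abs]
        exact ht_bound n i
    obtain ⟨a, -, φ, hφ, hz⟩ := hKcpt.tendsto_subseq hzmem
    obtain ⟨θL, αL, vL, tL⟩ := a
    have hzθ : Filter.Tendsto (fun n => θo (u' (φ n))) Filter.atTop (nhds θL) := by
      have h := (continuous_fst.tendsto ((θL, αL, vL, tL) :
        (V →L[ℂ] W) × (V →L[ℂ] V) × (Fin d → V) × (Fin d → ℝ))).comp hz
      simpa [Function.comp_def, hzdef] using h
    have hzα : Filter.Tendsto (fun n => αo (u' (φ n))) Filter.atTop (nhds αL) := by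
      have h := ((continuous_fst.comp continuous_snd).tendsto ((θL, αL, vL, tL) :
        (V →L[ℂ] W) × (V →L[ℂ] V) × (Fin d → V) × (Fin d → ℝ))).comp hz
      simpa [Function.comp_def, hzdef] using h
    have hzv : Filter.Tendsto (fun n => (fun i => v (φ n) i)) Filter.atTop (nhds vL) := by
      have h := ((continuous_fst.comp (continuous_snd.comp continuous_snd)).tendsto
        ((θL, αL, vL, tL) :
        (V →L[ℂ] W) × (V →L[ℂ] V) × (Fin d → V) × (Fin d → ℝ))).comp hz
      simpa [Function.comp_def, hzdef] using h
    have hzt : Filter.Tendsto (fun n => t (φ n)) Filter.atTop (nhds tL) := by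
      have h := ((continuous_snd.comp (continuous_snd.comp continuous_snd)).tendsto
        ((θL, αL, vL, tL) :
        (V →L[ℂ] W) × (V →L[ℂ] V) × (Fin d → V) × (Fin d → ℝ))).comp hz
      simpa [Function.comp_def, hzdef] using h
    have hvL : ∀ i, Filter.Tendsto (fun n => v (φ n) i) Filter.atTop (nhds (vL i)) :=
      fun i => tendsto_pi_nhds.mp hzv i
    have htL : ∀ i, Filter.Tendsto (fun n => t (φ n) i) Filter.atTop (nhds (tL i)) :=
      fun i => tendsto_pi_nhds.mp hzt i
    have htLmono : Monotone tL := fun i j hij =>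
      le_of_tendsto_of_tendsto' (htL i) (htL j) (fun n => hmono (φ n) hij)
    have htLpos : ∀ i, 0 ≤ tL i := fun i => ge_of_tendsto' (htL i) (fun n => htp (φ n) i)
    have hvLon : Orthonormal ℂ vL := by
      rw [orthonormal_iff_ite]
      intro i j
      have h1 : Filter.Tendsto (fun n => (inner ℂ (v (φ n) i) (v (φ n) j) : ℂ)) Filter.atTop
          (nhds (inner ℂ (vL i) (vL j))) := (hvL i).inner (hvL j)
      have h2 : ∀ n, (inner ℂ (v (φ n) i) (v (φ n) j) : ℂ) = if i = j then 1 else 0 :=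
        fun n => orthonormal_iff_ite.mp (v (φ n)).orthonormal i j
      simp only [h2] at h1
      exact tendsto_nhds_unique h1 tendsto_const_nhds
    have hspan : ⊤ ≤ Submodule.span ℂ (Set.range vL) :=
      (hvLon.linearIndependent.span_eq_top_of_card_eq_finrank' (by simp [hd])).ge
    set vb : OrthonormalBasis (Fin d) ℂ V := OrthonormalBasis.mk hvLon hspan with hvbdef
    have hvb : ∀ i, vb i = vL i := fun i => by rw [hvbdef, OrthonormalBasis.coe_mk]
    have hαLv : ∀ i, αL (vL i) = ((tL i : ℝ) : ℂ) • vL i := by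
      intro i
      have h1 : Filter.Tendsto (fun n => (αo (u' (φ n))) (v (φ n) i)) Filter.atTop
          (nhds (αL (vL i))) := by
        have h := (isBoundedBilinearMap_apply.continuous.tendsto
          ((αL, vL i) : (V →L[ℂ] V) × V)).comp (hzα.prodMk_nhds (hvL i))
        simpa [Function.comp_def] using h
      have h2 : Filter.Tendsto (fun n => ((t (φ n) i : ℝ) : ℂ) • v (φ n) i) Filter.atTop
          (nhds (((tL i : ℝ) : ℂ) • vL i)) :=
        ((Complex.continuous_ofReal.tendsto _).comp (htL i)).smul (hvL i)
      have h3 : ∀ n, (αo (u' (φ n))) (v (φ n) i) = ((t (φ n) i : ℝ) : ℂ) • v (φ n) i :=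
        fun n => hvt (φ n) i
      simp only [h3] at h1
      exact tendsto_nhds_unique h1 h2
    have hαLeq : αL = millerDiag vL tL := by
      refine miller_ext vb fun i => ?_
      rw [hvb i, hαLv i, millerDiag_basis hvLon]
    have hαLpos : αL.IsPositive := by rw [hαLeq]; exact millerDiag_pos vL htLpos
    have hτ : Filter.Tendsto (fun n => (⟨t (φ n), hmono (φ n), htp (φ n)⟩ :
        {t : Fin d → ℝ // Monotone t ∧ ∀ i, 0 ≤ t i})) Filter.atTop
        (nhds (⟨tL, htLmono, htLpos⟩ : {t : Fin d → ℝ // Monotone t ∧ ∀ i, 0 ≤ t i})) := by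
      rw [tendsto_subtype_rng]
      exact hzt
    have hsf : Filter.Tendsto
        (fun n => ((f ⟨t (φ n), hmono (φ n), htp (φ n)⟩ : Fin d → ℝ)))
        Filter.atTop (nhds ((f ⟨tL, htLmono, htLpos⟩ : Fin d → ℝ))) := by
      have h := (hf.tendsto _).comp hτ
      rw [tendsto_subtype_rng] at h
      simpa [Function.comp_def] using h
    have hD : ∀ n, (A ⟨αo (u' n), hαo (u' n)⟩ : V →L[ℂ] V) =
        millerDiag (fun i => v n i) ((f ⟨t n, hmono n, htp n⟩ : Fin d → ℝ)) := by
      intro n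
      have hAv := hA ⟨αo (u' n), hαo (u' n)⟩ (t n) (hmono n) (htp n) (v n) (hvt n)
      refine miller_ext (v n) fun i => ?_
      rw [hAv i, millerDiag_basis (v n).orthonormal]
    have hAL : (A ⟨αL, hαLpos⟩ : V →L[ℂ] V) =
        millerDiag vL ((f ⟨tL, htLmono, htLpos⟩ : Fin d → ℝ)) := by
      have hAv := hA ⟨αL, hαLpos⟩ tL htLmono htLpos vb (fun i => by rw [hvb i]; exact hαLv i)
      refine miller_ext vb fun i => ?_
      rw [hAv i, hvb i, millerDiag_basis hvLon]
    have hAtend : Filter.Tendsto (fun n => (A ⟨αo (u' (φ n)), hαo (u' (φ n))⟩ : V →L[ℂ] V))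
        Filter.atTop (nhds (A ⟨αL, hαLpos⟩ : V →L[ℂ] V)) := by
      simp only [hD, hAL]
      have h := (Continuous.tendsto millerDiag_continuous
        ((vL, (f ⟨tL, htLmono, htLpos⟩ : Fin d → ℝ)) :
          (Fin d → V) × (Fin d → ℝ))).comp (hzv.prodMk_nhds hsf)
      simpa [Function.comp_def] using h
    have hBtend : Filter.Tendsto (fun n => B (u' (φ n))) Filter.atTop
        (nhds (θL ∘L (A ⟨αL, hαLpos⟩ : V →L[ℂ] V))) := by
      have h := (isBoundedBilinearMap_comp.continuous.tendsto
        ((θL, (A ⟨αL, hαLpos⟩ : V →L[ℂ] V)) :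
          (V →L[ℂ] W) × (V →L[ℂ] V))).comp (hzθ.prodMk_nhds hAtend)
      simpa [Function.comp_def, hB] using h
    have hθLiso : ∀ x, ‖θL x‖ = ‖x‖ := by
      intro x
      have h1 : Filter.Tendsto (fun n => θo (u' (φ n)) x) Filter.atTop (nhds (θL x)) := by
        have h := ((ContinuousLinearMap.apply ℂ W x).continuous.tendsto θL).comp hzθ
        simpa [Function.comp_def] using h
      have h2 := h1.norm
      simp only [hθo] at h2
      exact tendsto_nhds_unique h2 tendsto_const_nhds
    have hφtop : Filter.Tendsto φ Filter.atTop Filter.atTop := hφ.tendsto_atTop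
    have hθαLim : θL ∘L αL = γ₀ := by
      have h1 : Filter.Tendsto (fun n => θo (u' (φ n)) ∘L αo (u' (φ n))) Filter.atTop
          (nhds (θL ∘L αL)) := by
        have h := (isBoundedBilinearMap_comp.continuous.tendsto
          ((θL, αL) : (V →L[ℂ] W) × (V →L[ℂ] V))).comp (hzθ.prodMk_nhds hzα)
        simpa [Function.comp_def] using h
      simp only [hθαo] at h1
      exact tendsto_nhds_unique h1 (hu'.comp hφtop)
    have hαLsq : αL ∘L αL = adjoint γ₀ ∘L γ₀ := by
      have h1 : Filter.Tendsto (fun n => αo (u' (φ n)) ∘L αo (u' (φ n))) Filter.atTop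
          (nhds (αL ∘L αL)) := by
        have h := (isBoundedBilinearMap_comp.continuous.tendsto
          ((αL, αL) : (V →L[ℂ] V) × (V →L[ℂ] V))).comp (hzα.prodMk_nhds hzα)
        simpa [Function.comp_def] using h
      simp only [hαsqo] at h1
      have hadj : Filter.Tendsto (fun n => adjoint (u' (φ n))) Filter.atTop
          (nhds (adjoint γ₀)) := by
        have h := ((ContinuousLinearMap.adjoint :
          (V →L[ℂ] W) ≃ₗᵢ⋆[ℂ] (W →L[ℂ] V)).continuous.tendsto γ₀).comp (hu'.comp hφtop)
        simpa [Function.comp_def] using h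
      have h2 : Filter.Tendsto (fun n => adjoint (u' (φ n)) ∘L (u' (φ n))) Filter.atTop
          (nhds (adjoint γ₀ ∘L γ₀)) := by
        have h := (isBoundedBilinearMap_comp.continuous.tendsto
          ((adjoint γ₀, γ₀) : (W →L[ℂ] V) × (V →L[ℂ] W))).comp
          (hadj.prodMk_nhds (hu'.comp hφtop))
        simpa [Function.comp_def] using h
      exact tendsto_nhds_unique h1 h2
    have hEq2 : αo γ₀ = αL :=
      miller_sqrt_unique (hαo γ₀) hαLpos (by rw [hαsqo γ₀, hαLsq])
    have hc : θo γ₀ ∘L αL = θL ∘L αL := by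
      have e1 : θo γ₀ ∘L αL = γ₀ := by rw [← hEq2]; exact hθαo γ₀
      rw [e1, hθαLim]
    have h5 := hwd αL hαLpos (θo γ₀) θL (hθo γ₀) hθLiso hc
    have hAeq2 : A ⟨αo γ₀, hαo γ₀⟩ = A ⟨αL, hαLpos⟩ := by
      congr 1
      exact Subtype.ext hEq2
    have hfinal : B γ₀ = θL ∘L (A ⟨αL, hαLpos⟩ : V →L[ℂ] V) := by
      calc B γ₀ = θo γ₀ ∘L (A ⟨αo γ₀, hαo γ₀⟩ : V →L[ℂ] V) := rfl
      _ = θo γ₀ ∘L (A ⟨αL, hαLpos⟩ : V →L[ℂ] V) := by rw [hAeq2]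
      _ = θL ∘L (A ⟨αL, hαLpos⟩ : V →L[ℂ] V) := h5
    refine ⟨φ, ?_⟩
    rw [← hfinal] at hBtend
    exact hBtend
  -- property (3)
  have hprop3 : ∀ (γ : V →L[ℂ] W) (r r' : V →L[ℂ] V) (hr : r.IsPositive),
      r ∘L r = adjoint γ ∘L γ → r'.IsPositive →
      r' ∘L r' = adjoint (B γ) ∘L (B γ) → r' = (A ⟨r, hr⟩ : V →L[ℂ] V) := by
    intro γ r r' hr hrsq hr' hr'sq
    have hEq : r = αo γ := miller_sqrt_unique hr (hαo γ) (by rw [hrsq, hαsqo γ])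
    have ha : (A ⟨αo γ, hαo γ⟩ : V →L[ℂ] V).IsPositive := (A ⟨αo γ, hαo γ⟩).2
    have h2 : adjoint (B γ) ∘L (B γ) =
        (A ⟨αo γ, hαo γ⟩ : V →L[ℂ] V) ∘L (A ⟨αo γ, hαo γ⟩ : V →L[ℂ] V) := by
      rw [hB]
      simp only
      rw [adjoint_comp, ContinuousLinearMap.comp_assoc,
        ← ContinuousLinearMap.comp_assoc (adjoint (θo γ)),
        miller_isometry_adjoint (hθo γ), ContinuousLinearMap.id_comp, ha.isSelfAdjoint.adjoint_eq]
    have h3 : r' = (A ⟨αo γ, hαo γ⟩ : V →L[ℂ] V) :=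
      miller_sqrt_unique hr' ha (by rw [hr'sq, h2])
    rw [h3]
    congr 2
    exact Subtype.ext hEq.symm
  refine ⟨B, ⟨hprop1, hcont, hprop3⟩, ?_⟩
  intro B' hB'
  funext γ
  have hneg_iso : ∀ x, ‖(-(θo γ)) x‖ = ‖x‖ := fun x => by
    rw [ContinuousLinearMap.neg_apply, norm_neg]; exact hθo γ x
  have h1 := hB'.1 ⟨αo γ, hαo γ⟩ ⟨-(θo γ), hneg_iso⟩
  simp only [ContinuousLinearMap.neg_comp, neg_neg] at h1
  rw [hθαo γ] at h1
  rw [h1]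
end

section
/- Let D'_+(2) := {(t_0, t_1) ∈ ℝ² : 0 ≤ t_0 ≤ t_1} and D_0'(2) := {(t_0,t_1) ∈ D'_+(2) : t_0 = 0}, and let X := {z ∈ ℂ : |z| ≤ 1, Im(z) ≥ 0} and Y := {z ∈ X : |z| = 1}. Then for all (t_0,t_1) ∈ D'_+(2) one has i + (t_1 + i t_0)² ≠ 0, and the map φ : D'_+(2) → ℂ defined by φ(t_0, t_1) := (i − (t_1 + i t_0)²)/(i + (t_1 + i t_0)²) is a topological embedding whose image is X \ {−1}, and which maps D_0'(2) bijectively onto Y \ {−1}. Consequently φ extends to a homeomorphism of the one-point compactification of D'_+(2) onto X sending the point at infinity to −1 and carrying D_0'(2) ∪ {∞} onto Y. -/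
open scoped OnePoint

/-- The closed upper half unit disc in `ℂ`. -/
def upperHalfDisc : Set ℂ := {z : ℂ | ‖z‖ ≤ 1 ∧ 0 ≤ z.im}

/-- The upper unit semicircle in `ℂ`. -/
def upperSemicircle : Set ℂ := {z : ℂ | ‖z‖ = 1 ∧ 0 ≤ z.im}

/-- `D'₊(2) = {(t₀,t₁) : 0 ≤ t₀ ≤ t₁}`. -/
def Dplus2 : Set (ℝ × ℝ) := {p : ℝ × ℝ | 0 ≤ p.1 ∧ p.1 ≤ p.2}

/-- `φ(t₀,t₁) = (i − (t₁ + i t₀)²)/(i + (t₁ + i t₀)²)`. -/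
noncomputable def phiMap (p : ℝ × ℝ) : ℂ :=
  (Complex.I - ((p.2 : ℂ) + Complex.I * (p.1 : ℂ)) ^ 2) /
    (Complex.I + ((p.2 : ℂ) + Complex.I * (p.1 : ℂ)) ^ 2)

noncomputable def denC (p : ℝ × ℝ) : ℂ := Complex.I + ((p.2 : ℂ) + Complex.I * (p.1 : ℂ)) ^ 2
noncomputable def numC (p : ℝ × ℝ) : ℂ := Complex.I - ((p.2 : ℂ) + Complex.I * (p.1 : ℂ)) ^ 2


lemma phiMap_eq (p : ℝ × ℝ) : phiMap p = numC p / denC p := rfl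

lemma denC_eq (p : ℝ × ℝ) : denC p = Complex.mk (p.2^2 - p.1^2) (1 + 2*p.1*p.2) := by
  apply Complex.ext
  all_goals simp [denC, pow_two, Complex.add_re, Complex.add_im, Complex.mul_re, Complex.mul_im]
  all_goals ring

lemma numC_eq (p : ℝ × ℝ) : numC p = Complex.mk (-(p.2^2 - p.1^2)) (1 - 2*p.1*p.2) := by
  apply Complex.ext
  all_goals simp [numC, pow_two, Complex.add_re, Complex.add_im, Complex.mul_re, Complex.mul_im]
  all_goals ring

lemma numC_eq' (p : ℝ × ℝ) : numC p = 2 * Complex.I - denC p := by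
  simp [numC, denC]; ring

lemma denC_ne_zero {p : ℝ × ℝ} (hp : 0 ≤ p.1 * p.2) : denC p ≠ 0 := by
  intro h
  have : (denC p).im = 0 := by rw [h]; simp
  rw [denC_eq] at this
  simp at this
  nlinarith

lemma normSq_denC (p : ℝ × ℝ) :
    Complex.normSq (denC p) = (p.2^2 - p.1^2)^2 + (1 + 2*p.1*p.2)^2 := by
  rw [denC_eq, Complex.normSq_mk]; ring

lemma normSq_numC (p : ℝ × ℝ) :
    Complex.normSq (numC p) = (p.2^2 - p.1^2)^2 + (1 - 2*p.1*p.2)^2 := by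
  rw [numC_eq, Complex.normSq_mk]; ring

lemma abs_phiMap_le {p : ℝ × ℝ} (hp : p ∈ Dplus2) : ‖phiMap p‖ ≤ 1 := by
  obtain ⟨h0, h1⟩ := hp
  have hd : denC p ≠ 0 := denC_ne_zero (mul_nonneg h0 (h0.trans h1))
  rw [phiMap_eq, norm_div, div_le_one (norm_pos_iff.mpr hd)]
  rw [Complex.norm_def, Complex.norm_def]
  apply Real.sqrt_le_sqrt
  rw [normSq_numC, normSq_denC]
  nlinarith

lemma im_phiMap_nonneg {p : ℝ × ℝ} (hp : p ∈ Dplus2) : 0 ≤ (phiMap p).im := by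
  obtain ⟨h0, h1⟩ := hp
  rw [phiMap_eq, Complex.div_im, normSq_denC, numC_eq, denC_eq]
  simp only []
  have h2 : (0:ℝ) ≤ (p.2^2 - p.1^2)^2 + (1 + 2*p.1*p.2)^2 := by positivity
  have h3 : (1 - 2*p.1*p.2) * (p.2^2 - p.1^2) - -(p.2^2 - p.1^2) * (1 + 2*p.1*p.2)
      = 2*(p.2^2 - p.1^2) := by ring
  rw [div_sub_div_same]
  rw [h3]
  apply div_nonneg _ h2
  nlinarith

lemma phiMap_add_one {p : ℝ × ℝ} (hp : 0 ≤ p.1 * p.2) :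
    phiMap p + 1 = 2 * Complex.I / denC p := by
  have hd := denC_ne_zero hp
  rw [phiMap_eq, numC_eq']
  field_simp
  ring

lemma phiMap_ne_neg_one {p : ℝ × ℝ} (hp : p ∈ Dplus2) : phiMap p ≠ -1 := by
  obtain ⟨h0, h1⟩ := hp
  have hd : denC p ≠ 0 := denC_ne_zero (mul_nonneg h0 (h0.trans h1))
  intro h
  have h2 : phiMap p + 1 = 0 := by rw [h]; ring
  rw [phiMap_add_one (mul_nonneg h0 (h0.trans h1))] at h2
  have := div_eq_zero_iff.mp h2
  simp [Complex.I_ne_zero, hd] at this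

lemma phiMap_mem {p : ℝ × ℝ} (hp : p ∈ Dplus2) : phiMap p ∈ upperHalfDisc :=
  ⟨abs_phiMap_le hp, im_phiMap_nonneg hp⟩

lemma phiMap_inj : Set.InjOn phiMap Dplus2 := by
  rintro p ⟨hp0, hp1⟩ q ⟨hq0, hq1⟩ h
  have hdp : denC p ≠ 0 := denC_ne_zero (mul_nonneg hp0 (hp0.trans hp1))
  have hdq : denC q ≠ 0 := denC_ne_zero (mul_nonneg hq0 (hq0.trans hq1))
  rw [phiMap_eq, phiMap_eq, div_eq_div_iff hdp hdq, numC_eq', numC_eq'] at h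
  have hden : denC p = denC q := by
    have h2 : 2 * Complex.I * denC q = 2 * Complex.I * denC p := by ring_nf at h ⊢; linear_combination h
    have := mul_left_cancel₀ (a := 2 * Complex.I) (by simp [Complex.I_ne_zero]) h2
    exact this.symm
  rw [denC_eq, denC_eq, Complex.ext_iff] at hden
  obtain ⟨e1, e2⟩ := hden
  simp only [] at e1 e2
  have e2' : p.1 * p.2 = q.1 * q.2 := by linarith
  have h4 : (p.1^2 + p.2^2)^2 = (q.1^2 + q.2^2)^2 := by
    linear_combination (p.2^2 - p.1^2 + q.2^2 - q.1^2) * e1 + 4*(p.1*p.2 + q.1*q.2) * e2'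
  have hsum : p.1^2 + p.2^2 = q.1^2 + q.2^2 := by
    rcases mul_eq_zero.mp (show (p.1^2+p.2^2 - (q.1^2+q.2^2)) * (p.1^2+p.2^2 + (q.1^2+q.2^2)) = 0
      by linear_combination h4) with h | h
    · linarith
    · nlinarith [sq_nonneg p.1, sq_nonneg p.2, sq_nonneg q.1, sq_nonneg q.2]
  have hb2 : p.2^2 = q.2^2 := by linarith
  have ha2 : p.1^2 = q.1^2 := by linarith
  have hb : p.2 = q.2 := by
    rcases mul_eq_zero.mp (show (p.2 - q.2) * (p.2 + q.2) = 0 by linear_combination hb2) with h | h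
    · linarith
    · have := hp0.trans hp1; have := hq0.trans hq1; linarith
  have ha : p.1 = q.1 := by
    rcases mul_eq_zero.mp (show (p.1 - q.1) * (p.1 + q.1) = 0 by linear_combination ha2) with h | h
    · linarith
    · linarith
  exact Prod.ext ha hb

lemma abs_phiMap_eq_one_iff {p : ℝ × ℝ} (hp : p ∈ Dplus2) :
    ‖phiMap p‖ = 1 ↔ p.1 = 0 := by
  obtain ⟨h0, h1⟩ := hp
  have hd : denC p ≠ 0 := denC_ne_zero (mul_nonneg h0 (h0.trans h1))
  rw [phiMap_eq, norm_div, div_eq_one_iff_eq (norm_ne_zero_iff.mpr hd)]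
  rw [Complex.norm_def, Complex.norm_def,
    Real.sqrt_inj (Complex.normSq_nonneg _) (Complex.normSq_nonneg _),
    normSq_numC, normSq_denC]
  constructor
  · intro h; nlinarith
  · intro h; rw [h]; ring

lemma phiMap_surj {z : ℂ} (hz : z ∈ upperHalfDisc) (hz1 : z ≠ -1) :
    ∃ p ∈ Dplus2, phiMap p = z := by
  obtain ⟨habs, him⟩ := hz
  have h1z : (1 : ℂ) + z ≠ 0 := by
    intro h; apply hz1; linear_combination h
  set s : ℂ := Complex.I * (1 - z) / (1 + z) with hs
  have hns : (0:ℝ) < Complex.normSq (1 + z) := by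
    simpa [Complex.normSq_pos] using h1z
  have hsre : s.re = 2 * z.im / Complex.normSq (1 + z) := by
    rw [hs, Complex.div_re]
    simp [Complex.normSq_apply, Complex.add_re, Complex.add_im, Complex.mul_re, Complex.mul_im,
      Complex.sub_re, Complex.sub_im]
    field_simp
    ring
  have hsim : s.im = (1 - Complex.normSq z) / Complex.normSq (1 + z) := by
    rw [hs, Complex.div_im]
    simp only [Complex.normSq_apply, Complex.add_re, Complex.add_im, Complex.mul_re,
      Complex.mul_im, Complex.sub_re, Complex.sub_im, Complex.I_re, Complex.I_im,
      Complex.one_re, Complex.one_im]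
    field_simp
    ring
  have hnz : Complex.normSq z ≤ 1 := by
    have := Complex.sq_norm z
    nlinarith [norm_nonneg z]
  have hsre0 : 0 ≤ s.re := by rw [hsre]; positivity
  have hsim0 : 0 ≤ s.im := by
    rw [hsim]; apply div_nonneg (by linarith) hns.le
  -- construct the square root of s
  set x : ℝ := Real.sqrt ((‖s‖ + s.re) / 2) with hx
  set y : ℝ := Real.sqrt ((‖s‖ - s.re) / 2) with hy
  have hre_le : s.re ≤ ‖s‖ := Complex.re_le_norm s
  have hx0 : 0 ≤ x := Real.sqrt_nonneg _
  have hy0 : 0 ≤ y := Real.sqrt_nonneg _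
  have hx2 : x^2 = (‖s‖ + s.re) / 2 := Real.sq_sqrt (by positivity)
  have hy2 : y^2 = (‖s‖ - s.re) / 2 := Real.sq_sqrt (by linarith)
  have hyx : y ≤ x := by
    rw [hx, hy]; exact Real.sqrt_le_sqrt (by linarith)
  have hxy : x * y = s.im / 2 := by
    rw [hx, hy, ← Real.sqrt_mul (by positivity)]
    have : (‖s‖ + s.re) / 2 * ((‖s‖ - s.re) / 2) = s.im^2 / 4 := by
      have habs2 : (‖s‖)^2 = s.re^2 + s.im^2 := by
        rw [Complex.sq_norm, Complex.normSq_apply]; ring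
      nlinarith
    rw [this]
    rw [show s.im^2/4 = (s.im/2)^2 by ring, Real.sqrt_sq (by linarith)]
  have hw2 : ((x : ℂ) + Complex.I * (y : ℂ))^2 = s := by
    apply Complex.ext
    · simp [pow_two, Complex.add_re, Complex.add_im, Complex.mul_re, Complex.mul_im]
      nlinarith
    · simp [pow_two, Complex.add_re, Complex.add_im, Complex.mul_re, Complex.mul_im]
      nlinarith
  refine ⟨(y, x), ⟨hy0, hyx⟩, ?_⟩
  have hmem : ((y, x) : ℝ × ℝ) ∈ Dplus2 := ⟨hy0, hyx⟩
  have hd : denC (y, x) ≠ 0 := denC_ne_zero (mul_nonneg hy0 (hy0.trans hyx))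
  rw [phiMap_eq]
  have hnum : numC (y, x) = Complex.I - s := by rw [numC, ← hw2]
  have hden : denC (y, x) = Complex.I + s := by rw [denC, ← hw2]
  rw [hnum, hden]
  rw [div_eq_iff (by rw [← hden]; exact hd)]
  rw [hs]
  field_simp
  ring

lemma isClosed_Dplus2 : IsClosed Dplus2 :=
  (isClosed_le continuous_const continuous_fst).inter
    (isClosed_le continuous_fst continuous_snd)

lemma abs_denC_ge {p : ℝ × ℝ} (hp : p ∈ Dplus2) :
    p.1^2 + p.2^2 ≤ ‖denC p‖ := by
  obtain ⟨h0, h1⟩ := hp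
  have : (p.1^2 + p.2^2)^2 ≤ Complex.normSq (denC p) := by
    rw [normSq_denC]; nlinarith
  calc p.1^2 + p.2^2 = Real.sqrt ((p.1^2 + p.2^2)^2) := (Real.sqrt_sq (by positivity)).symm
    _ ≤ Real.sqrt (Complex.normSq (denC p)) := Real.sqrt_le_sqrt this
    _ = ‖denC p‖ := (Complex.norm_def _).symm

lemma continuous_phi_sub : Continuous (fun p : ↥Dplus2 => phiMap p.1) := by
  have hden : Continuous (fun p : ↥Dplus2 => denC p.1) := by
    unfold denC; fun_prop
  have hnum : Continuous (fun p : ↥Dplus2 => numC p.1) := by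
    unfold numC; fun_prop
  have : (fun p : ↥Dplus2 => phiMap p.1) = fun p => numC p.1 / denC p.1 := by
    funext p; exact phiMap_eq p.1
  rw [this]
  exact hnum.div hden (fun p => denC_ne_zero (mul_nonneg p.2.1 (p.2.1.trans p.2.2)))

lemma tendsto_phi_cocompact :
    Filter.Tendsto (fun p : ↥Dplus2 => phiMap p.1) (Filter.cocompact ↥Dplus2) (nhds (-1)) := by
  rw [Metric.tendsto_nhds]
  intro ε hε
  rw [Filter.eventually_iff, Filter.mem_cocompact]
  refine ⟨Subtype.val ⁻¹' Metric.closedBall 0 (Real.sqrt (2/ε)), ?_, ?_⟩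
  · rw [Topology.IsEmbedding.subtypeVal.isCompact_iff, Subtype.image_preimage_coe]
    exact (isCompact_closedBall _ _).inter_left isClosed_Dplus2
  · intro p hp
    simp only [Set.mem_compl_iff, Set.mem_preimage, Metric.mem_closedBall, not_le,
      dist_zero_right] at hp
    have h2e : (0:ℝ) < 2/ε := by positivity
    have hr2 : 2/ε < ‖(p : ℝ × ℝ)‖^2 := by
      nlinarith [Real.sq_sqrt h2e.le, Real.sqrt_nonneg (2/ε), hp]
    have hab : 2/ε < (p:ℝ×ℝ).1^2 + (p:ℝ×ℝ).2^2 := by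
      have hle : ‖(p:ℝ×ℝ)‖^2 ≤ (p:ℝ×ℝ).1^2 + (p:ℝ×ℝ).2^2 := by
        rw [Prod.norm_def, Real.norm_eq_abs, Real.norm_eq_abs]
        rcases max_choice |(p:ℝ×ℝ).1| |(p:ℝ×ℝ).2| with h | h <;> rw [h, sq_abs] <;>
          nlinarith [sq_nonneg (p:ℝ×ℝ).1, sq_nonneg (p:ℝ×ℝ).2]
      linarith
    have hd := abs_denC_ge p.2
    have hdpos : (0:ℝ) < ‖denC (p:ℝ×ℝ)‖ := by linarith
    have hds : (p : ℝ × ℝ) ∈ Dplus2 := p.2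
    show dist (phiMap (p:ℝ×ℝ)) (-1) < ε
    rw [Complex.dist_eq, sub_neg_eq_add,
      phiMap_add_one (mul_nonneg hds.1 (hds.1.trans hds.2)), norm_div]
    have habs2 : ‖2 * Complex.I‖ = 2 := by
      rw [norm_mul, Complex.norm_I, Complex.norm_two, mul_one]
    rw [habs2, div_lt_iff₀ hdpos]
    have he2 : ε * (2/ε) = 2 := by field_simp
    nlinarith [mul_le_mul_of_nonneg_left hd hε.le, mul_lt_mul_of_pos_left hab hε]

lemma neg_one_mem_disc : (-1 : ℂ) ∈ upperHalfDisc := by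
  constructor <;> simp [upperHalfDisc]

lemma neg_one_mem_circ : (-1 : ℂ) ∈ upperSemicircle := by
  constructor <;> simp [upperSemicircle]

noncomputable def gmap (p : ↥Dplus2) : ↥upperHalfDisc := ⟨phiMap p.1, phiMap_mem p.2⟩

noncomputable def PhiEquiv : OnePoint ↥Dplus2 ≃ ↥upperHalfDisc :=
  Equiv.ofBijective (fun x => OnePoint.rec (⟨-1, neg_one_mem_disc⟩ : ↥upperHalfDisc) gmap x)
    (by
      constructor
      · intro x y h
        induction x using OnePoint.rec with
        | infty =>
          induction y using OnePoint.rec with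
          | infty => rfl
          | coe q =>
            exact absurd (congrArg Subtype.val h).symm (phiMap_ne_neg_one q.2)
        | coe p =>
          induction y using OnePoint.rec with
          | infty => exact absurd (congrArg Subtype.val h) (phiMap_ne_neg_one p.2)
          | coe q =>
            have := phiMap_inj p.2 q.2 (congrArg Subtype.val h)
            exact congrArg _ (Subtype.ext this)
      · rintro ⟨z, hz⟩
        by_cases h : z = -1
        · exact ⟨∞, Subtype.ext h.symm⟩
        · obtain ⟨p, hp, hpz⟩ := phiMap_surj hz h
          exact ⟨OnePoint.some ⟨p, hp⟩, Subtype.ext hpz⟩)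

lemma continuous_PhiEquiv : Continuous PhiEquiv := by
  rw [show (PhiEquiv : OnePoint ↥Dplus2 → ↥upperHalfDisc)
      = fun x => OnePoint.rec (⟨-1, neg_one_mem_disc⟩ : ↥upperHalfDisc) gmap x from rfl,
    OnePoint.continuous_iff]
  constructor
  · rw [Filter.coclosedCompact_eq_cocompact,
      Topology.IsEmbedding.subtypeVal.tendsto_nhds_iff]
    exact tendsto_phi_cocompact
  · exact continuous_phi_sub.subtype_mk _

noncomputable def PhiHomeo : OnePoint ↥Dplus2 ≃ₜ ↥upperHalfDisc :=
  Continuous.homeoOfEquivCompactToT2 continuous_PhiEquiv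

lemma PhiHomeo_coe (p : ↥Dplus2) : (PhiHomeo (OnePoint.some p) : ℂ) = phiMap p.1 := rfl

lemma PhiHomeo_infty : (PhiHomeo ∞ : ℂ) = -1 := rfl

/-- For `(t₀,t₁) ∈ D'₊(2)` the denominator `i + (t₁+it₀)²` is nonzero;
`φ` is a topological embedding of `D'₊(2)` into `ℂ` with image `X \ {−1}` (where `X` is the
closed upper half disc), mapping `D₀'(2) = {t₀ = 0}` bijectively onto `Y \ {−1}` (`Y` the
upper semicircle); and `φ` extends to a homeomorphism of the one-point compactification of
`D'₊(2)` onto `X` sending `∞` to `−1` and carrying `D₀'(2) ∪ {∞}` onto `Y`. -/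
theorem miller_stmt13 :
    (∀ p ∈ Dplus2, Complex.I + ((p.2 : ℂ) + Complex.I * (p.1 : ℂ)) ^ 2 ≠ 0) ∧
    Topology.IsEmbedding (fun p : Dplus2 => phiMap p.1) ∧
    Set.range (fun p : Dplus2 => phiMap p.1) = upperHalfDisc \ {-1} ∧
    Set.BijOn phiMap {p : ℝ × ℝ | p ∈ Dplus2 ∧ p.1 = 0} (upperSemicircle \ {-1}) ∧
    ∃ Φ : OnePoint ↥Dplus2 ≃ₜ ↥upperHalfDisc,
      (∀ p : ↥Dplus2, (Φ (OnePoint.some p) : ℂ) = phiMap p.1) ∧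
      ((Φ ∞ : ℂ) = -1) ∧
      (∀ x : OnePoint ↥Dplus2,
        ((Φ x : ℂ) ∈ upperSemicircle ↔
          x = ∞ ∨ ∃ q : ↥Dplus2, (q : ℝ × ℝ).1 = 0 ∧ x = OnePoint.some q)) := by
  refine ⟨?_, ?_, ?_, ?_, PhiHomeo, PhiHomeo_coe, PhiHomeo_infty, ?_⟩
  · exact fun p hp => denC_ne_zero (mul_nonneg hp.1 (hp.1.trans hp.2))
  · have heq : (fun p : Dplus2 => phiMap p.1)
        = (Subtype.val ∘ PhiHomeo) ∘ (OnePoint.some : ↥Dplus2 → OnePoint ↥Dplus2) := rfl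
    rw [heq]
    exact (Topology.IsEmbedding.subtypeVal.comp PhiHomeo.isEmbedding).comp
      OnePoint.isOpenEmbedding_coe.isEmbedding
  · ext z
    constructor
    · rintro ⟨p, rfl⟩
      exact ⟨phiMap_mem p.2, phiMap_ne_neg_one p.2⟩
    · rintro ⟨hz, hz1⟩
      obtain ⟨p, hp, hpz⟩ := phiMap_surj hz (by simpa using hz1)
      exact ⟨⟨p, hp⟩, hpz⟩
  · refine ⟨?_, phiMap_inj.mono (fun p hp => hp.1), ?_⟩
    · rintro p ⟨hp, h0⟩
      exact ⟨⟨(abs_phiMap_eq_one_iff hp).mpr h0, (phiMap_mem hp).2⟩,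
        by simpa using phiMap_ne_neg_one hp⟩
    · rintro z ⟨⟨habs, him⟩, hz1⟩
      obtain ⟨p, hp, hpz⟩ := phiMap_surj ⟨le_of_eq habs, him⟩ (by simpa using hz1)
      refine ⟨p, ⟨hp, ?_⟩, hpz⟩
      exact (abs_phiMap_eq_one_iff hp).mp (by rw [hpz, habs])
  · intro x
    induction x using OnePoint.rec with
    | infty =>
      simp only [PhiHomeo_infty]
      exact iff_of_true neg_one_mem_circ (Or.inl trivial)
    | coe p =>
      rw [PhiHomeo_coe]
      constructor
      · rintro ⟨habs, -⟩
        exact Or.inr ⟨p, (abs_phiMap_eq_one_iff p.2).mp habs, rfl⟩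
      · rintro (h | ⟨q, hq0, hq⟩)
        · exact absurd h (by simp [OnePoint.coe_ne_infty])
        · have : p = q := by
            have := hq
            simpa [OnePoint.coe_eq_coe] using hq
          subst this
          exact ⟨(abs_phiMap_eq_one_iff p.2).mpr hq0, (phiMap_mem p.2).2⟩
end

section
/- Let d ≥ 2 and let f : D'_+(2) → D'_+(2) be a continuous proper facial map, written f(t_0, t_1) = (g(t_0,t_1), g(t_0,t_1) + h(t_0,t_1)) with g, h : D'_+(2) → ℝ≥0 continuous and h(t,t) = 0 for all t ≥ 0. Define f̂ : D'_+(d) → D'_+(d) by f̂(t_0,…,t_{d−1})_i := g(t_0, t_{d−1}) + ((t_i − t_0)/(t_{d−1} − t_0))·h(t_0, t_{d−1}) if t_0 < t_{d−1}, and f̂(t_0,…,t_{d−1})_i := g(t_0, t_{d−1}) if t_0 = t_{d−1}. Then f̂ is a well-defined continuous proper facial self-map of D'_+(d). -/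
/-- `D'₊(d) = {t ∈ ℝ^d : 0 ≤ t₀ ≤ … ≤ t_{d−1}}`. -/
def DplusSet (d : ℕ) : Type := {t : Fin d → ℝ // Monotone t ∧ ∀ i, 0 ≤ t i}

instance (d : ℕ) : TopologicalSpace (DplusSet d) :=
  instTopologicalSpaceSubtype

instance (d : ℕ) : T2Space (DplusSet d) := by unfold DplusSet; infer_instance

namespace Stmt15

variable {d : ℕ}

lemma h0 (hd : 2 ≤ d) : 0 < d := by omega

lemma h1 (hd : 2 ≤ d) : d - 1 < d := by omega

lemma contCoord (d : ℕ) (i : Fin d) : Continuous (fun t : DplusSet d => t.1 i) :=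
  (continuous_apply i).comp continuous_subtype_val

lemma le01 (hd : 2 ≤ d) (t : DplusSet d) :
    t.1 ⟨0, h0 hd⟩ ≤ t.1 ⟨d - 1, h1 hd⟩ :=
  t.2.1 (by simp [Fin.le_def])

lemma le_i (hd : 2 ≤ d) (t : DplusSet d) (i : Fin d) :
    t.1 ⟨0, h0 hd⟩ ≤ t.1 i := t.2.1 (by simp [Fin.le_def])

lemma i_le (hd : 2 ≤ d) (t : DplusSet d) (i : Fin d) :
    t.1 i ≤ t.1 ⟨d - 1, h1 hd⟩ := t.2.1 (by simp [Fin.le_def]; omega)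

def pj (hd : 2 ≤ d) (t : DplusSet d) : DplusSet 2 :=
  ⟨fun i => if (i : ℕ) = 0 then t.1 ⟨0, h0 hd⟩ else t.1 ⟨d - 1, h1 hd⟩, by
    refine ⟨?_, ?_⟩
    · intro i j hij
      dsimp only
      by_cases h1 : (i : ℕ) = 0 <;> by_cases h2 : (j : ℕ) = 0
      · simp [h1, h2]
      · simpa [h1, h2] using le01 hd t
      · exact absurd (le_antisymm ((Fin.le_def.1 hij).trans (by omega)) (Nat.zero_le _)) h1
      · simp [h1, h2]
    · intro i
      dsimp only
      split <;> exact t.2.2 _⟩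

lemma pj_zero (hd : 2 ≤ d) (t : DplusSet d) : (pj hd t).1 0 = t.1 ⟨0, h0 hd⟩ := rfl

lemma pj_one (hd : 2 ≤ d) (t : DplusSet d) : (pj hd t).1 1 = t.1 ⟨d - 1, h1 hd⟩ := rfl

lemma pj_continuous (hd : 2 ≤ d) : Continuous (pj hd) := by
  apply Continuous.subtype_mk
  apply continuous_pi
  intro i
  by_cases hi : (i : ℕ) = 0 <;> simp only [hi, if_true, if_false] <;> exact contCoord d _


noncomputable def rr (hd : 2 ≤ d) (t : DplusSet d) (i : Fin d) : ℝ :=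
  if t.1 ⟨0, h0 hd⟩ < t.1 ⟨d - 1, h1 hd⟩ then
    (t.1 i - t.1 ⟨0, h0 hd⟩) / (t.1 ⟨d - 1, h1 hd⟩ - t.1 ⟨0, h0 hd⟩)
  else 0

lemma rr_nonneg (hd : 2 ≤ d) (t : DplusSet d) (i : Fin d) : 0 ≤ rr hd t i := by
  unfold rr
  split
  · exact div_nonneg (sub_nonneg.2 (le_i hd t i)) (sub_nonneg.2 (le01 hd t))
  · exact le_refl 0

lemma rr_le_one (hd : 2 ≤ d) (t : DplusSet d) (i : Fin d) : rr hd t i ≤ 1 := by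
  unfold rr
  split
  · next hlt =>
      exact div_le_one_of_le₀ (by linarith [i_le hd t i]) (by linarith)
  · exact zero_le_one

lemma rr_mono (hd : 2 ≤ d) (t : DplusSet d) {i j : Fin d} (hij : i ≤ j) :
    rr hd t i ≤ rr hd t j := by
  unfold rr
  split
  · next hlt =>
      exact (div_le_div_iff_of_pos_right (by linarith)).2 (sub_le_sub_right (t.2.1 hij) _)
  · exact le_refl 0

lemma rr_congr (hd : 2 ≤ d) (t : DplusSet d) {i j : Fin d} (hij : t.1 i = t.1 j) :
    rr hd t i = rr hd t j := by
  unfold rr; rw [hij]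

lemma rr_zero (hd : 2 ≤ d) (t : DplusSet d) : rr hd t ⟨0, h0 hd⟩ = 0 := by
  unfold rr
  split <;> simp

lemma rr_last (hd : 2 ≤ d) (t : DplusSet d)
    (hlt : t.1 ⟨0, h0 hd⟩ < t.1 ⟨d - 1, h1 hd⟩) :
    rr hd t ⟨d - 1, h1 hd⟩ = 1 := by
  unfold rr
  rw [if_pos hlt, div_self (by linarith)]

lemma rr_eq_of_lt (hd : 2 ≤ d) (t : DplusSet d)
    (hlt : t.1 ⟨0, h0 hd⟩ < t.1 ⟨d - 1, h1 hd⟩) (i : Fin d) :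
    rr hd t i = (t.1 i - t.1 ⟨0, h0 hd⟩) / (t.1 ⟨d - 1, h1 hd⟩ - t.1 ⟨0, h0 hd⟩) := by
  unfold rr
  split
  · rfl
  · next hc => exact absurd hlt hc

lemma rr_eq_of_not_lt (hd : 2 ≤ d) (t : DplusSet d)
    (hnlt : ¬ t.1 ⟨0, h0 hd⟩ < t.1 ⟨d - 1, h1 hd⟩) (i : Fin d) :
    rr hd t i = 0 := by
  unfold rr
  split
  · next hc => exact absurd hc hnlt
  · rfl

noncomputable def Fhat (hd : 2 ≤ d) (g h : DplusSet 2 → ℝ) (hg0 : ∀ t, 0 ≤ g t) (hh0 : ∀ t, 0 ≤ h t)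
    (t : DplusSet d) : DplusSet d :=
  ⟨fun i => g (pj hd t) + rr hd t i * h (pj hd t), by
    refine ⟨?_, ?_⟩
    · intro i j hij
      exact add_le_add_right (mul_le_mul_of_nonneg_right (rr_mono hd t hij) (hh0 _)) _
    · intro i
      exact add_nonneg (hg0 _) (mul_nonneg (rr_nonneg hd t i) (hh0 _))⟩

lemma isClosed_carrier (d : ℕ) : IsClosed {t : Fin d → ℝ | Monotone t ∧ ∀ i, 0 ≤ t i} := by
  have : {t : Fin d → ℝ | Monotone t ∧ ∀ i, 0 ≤ t i}
      = {t : Fin d → ℝ | Monotone t} ∩ {t : Fin d → ℝ | ∀ i, 0 ≤ t i} := rfl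
  rw [this]
  apply IsClosed.inter
  · have h2 : {t : Fin d → ℝ | Monotone t}
        = ⋂ (i : Fin d) (j : Fin d) (_ : i ≤ j), {t : Fin d → ℝ | t i ≤ t j} := by
      ext t
      simp [Monotone]
    rw [h2]
    exact isClosed_iInter fun i => isClosed_iInter fun j => isClosed_iInter fun _ =>
      isClosed_le (continuous_apply i) (continuous_apply j)
  · have h3 : {t : Fin d → ℝ | ∀ i, 0 ≤ t i} = ⋂ (i : Fin d), {t : Fin d → ℝ | 0 ≤ t i} := by
      ext t; simp
    rw [h3]
    exact isClosed_iInter fun i => isClosed_le continuous_const (continuous_apply i)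

lemma val_closedEmbedding (d : ℕ) : Topology.IsClosedEmbedding (fun t : DplusSet d => t.1) :=
  (isClosed_carrier d).isClosedEmbedding_subtypeVal

lemma compact_of_bounded {s : Set (DplusSet d)} (hs : IsClosed s) (M : ℝ)
    (hM : ∀ t ∈ s, ∀ i, t.1 i ≤ M) : IsCompact s := by
  rw [(val_closedEmbedding d).isEmbedding.isCompact_iff]
  apply IsCompact.of_isClosed_subset
    (isCompact_Icc (a := (0 : Fin d → ℝ)) (b := fun _ => M))
    ((val_closedEmbedding d).isClosedMap _ hs)
  rintro x ⟨t, ht, rfl⟩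
  exact ⟨fun i => t.2.2 i, fun i => hM t ht i⟩

lemma pj_proper (hd : 2 ≤ d) (K : Set (DplusSet 2)) (hK : IsCompact K) :
    IsCompact (pj hd ⁻¹' K) := by
  obtain ⟨M, hM⟩ := (hK.image (contCoord 2 1)).bddAbove
  apply compact_of_bounded (hK.isClosed.preimage (pj_continuous hd)) M
  intro t ht i
  calc t.1 i ≤ t.1 ⟨d - 1, h1 hd⟩ := i_le hd t i
    _ = (pj hd t).1 1 := (pj_one hd t).symm
    _ ≤ M := hM (Set.mem_image_of_mem _ ht)

end Stmt15
/-- Let `d ≥ 2` and let `f : D'₊(2) → D'₊(2)` be a continuous proper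
facial map, written `f(t₀,t₁) = (g(t₀,t₁), g(t₀,t₁) + h(t₀,t₁))` with `g, h ≥ 0`
continuous and `h(t,t) = 0`.  Then the hat construction
`f̂(t)ᵢ = g(t₀,t_{d−1}) + ((tᵢ−t₀)/(t_{d−1}−t₀))·h(t₀,t_{d−1})` (resp. `g(t₀,t_{d−1})`
when `t₀ = t_{d−1}`) is a well-defined continuous proper facial self-map of `D'₊(d)`. -/
theorem miller_stmt15 (d : ℕ) (hd : 2 ≤ d)
    (f : DplusSet 2 → DplusSet 2) (hf : Continuous f)
    (hfproper : ∀ K : Set (DplusSet 2), IsCompact K → IsCompact (f ⁻¹' K))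
    (g h : DplusSet 2 → ℝ) (hg : Continuous g) (hh : Continuous h)
    (hg0 : ∀ t, 0 ≤ g t) (hh0 : ∀ t, 0 ≤ h t)
    (hgh : ∀ t : DplusSet 2, (f t).1 0 = g t ∧ (f t).1 1 = g t + h t)
    (hdiag : ∀ t : DplusSet 2, t.1 0 = t.1 1 → h t = 0)
    (hface : ∀ t : DplusSet 2, t.1 0 = t.1 1 → (f t).1 0 = (f t).1 1)
    (hzero : ∀ t : DplusSet 2, t.1 0 = 0 → (f t).1 0 = 0) :
    ∃ F : DplusSet d → DplusSet d,
      (∀ (t : DplusSet d) (p : DplusSet 2),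
        p.1 0 = t.1 ⟨0, by omega⟩ → p.1 1 = t.1 ⟨d - 1, by omega⟩ →
        ∀ i : Fin d, (F t).1 i =
          if t.1 ⟨0, by omega⟩ < t.1 ⟨d - 1, by omega⟩ then
            g p + ((t.1 i - t.1 ⟨0, by omega⟩) /
              (t.1 ⟨d - 1, by omega⟩ - t.1 ⟨0, by omega⟩)) * h p
          else g p) ∧
      Continuous F ∧
      (∀ K : Set (DplusSet d), IsCompact K → IsCompact (F ⁻¹' K)) ∧
      (∀ (t : DplusSet d) (i j : Fin d), (i : ℕ) + 1 = (j : ℕ) →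
        t.1 i = t.1 j → (F t).1 i = (F t).1 j) ∧
      (∀ t : DplusSet d, t.1 ⟨0, by omega⟩ = 0 → (F t).1 ⟨0, by omega⟩ = 0) := by
  classical
  have hcontF : Continuous (Stmt15.Fhat hd g h hg0 hh0) := by
    apply Continuous.subtype_mk
    apply continuous_pi
    intro i
    apply Continuous.add (hg.comp (Stmt15.pj_continuous hd))
    rw [continuous_iff_continuousAt]
    intro x
    by_cases hx : x.1 ⟨0, by omega⟩ < x.1 ⟨d - 1, by omega⟩
    · have hcont : ContinuousAt (fun t : DplusSet d =>
          ((t.1 i - t.1 ⟨0, by omega⟩) / (t.1 ⟨d - 1, by omega⟩ - t.1 ⟨0, by omega⟩))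
            * h (Stmt15.pj hd t)) x := by
        apply ContinuousAt.mul
        · exact ContinuousAt.div
            (((Stmt15.contCoord d i).sub (Stmt15.contCoord d _)).continuousAt)
            (((Stmt15.contCoord d _).sub (Stmt15.contCoord d _)).continuousAt)
            (sub_ne_zero.2 (ne_of_gt hx))
        · exact (hh.comp (Stmt15.pj_continuous hd)).continuousAt
      apply hcont.congr
      filter_upwards [(isOpen_lt (Stmt15.contCoord d ⟨0, by omega⟩)
        (Stmt15.contCoord d ⟨d - 1, by omega⟩)).mem_nhds hx] with t ht
      rw [Stmt15.rr_eq_of_lt hd t ht i]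
    · have hx0 : h (Stmt15.pj hd x) = 0 := by
        apply hdiag
        rw [Stmt15.pj_zero, Stmt15.pj_one]
        exact le_antisymm (Stmt15.le01 hd x) (not_lt.1 hx)
      show Filter.Tendsto _ (nhds x) (nhds (Stmt15.rr hd x i * h (Stmt15.pj hd x)))
      rw [hx0, mul_zero]
      apply squeeze_zero (fun t => mul_nonneg (Stmt15.rr_nonneg hd t i) (hh0 _))
        (fun t => mul_le_of_le_one_left (hh0 _) (Stmt15.rr_le_one hd t i))
      have hc2 : Continuous (fun t : DplusSet d => h (Stmt15.pj hd t)) :=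
        hh.comp (Stmt15.pj_continuous hd)
      have := hc2.tendsto x
      rwa [hx0] at this
  have key : ∀ t : DplusSet d,
      Stmt15.pj hd (Stmt15.Fhat hd g h hg0 hh0 t) = f (Stmt15.pj hd t) := by
    intro t
    apply Subtype.ext
    funext j
    fin_cases j
    · show (Stmt15.pj hd (Stmt15.Fhat hd g h hg0 hh0 t)).1 0 = (f (Stmt15.pj hd t)).1 0
      rw [Stmt15.pj_zero, (hgh _).1]
      show g (Stmt15.pj hd t) + Stmt15.rr hd t ⟨0, by omega⟩ * h (Stmt15.pj hd t) = _
      rw [Stmt15.rr_zero, zero_mul, add_zero]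
    · show (Stmt15.pj hd (Stmt15.Fhat hd g h hg0 hh0 t)).1 1 = (f (Stmt15.pj hd t)).1 1
      rw [Stmt15.pj_one, (hgh _).2]
      show g (Stmt15.pj hd t) + Stmt15.rr hd t ⟨d - 1, by omega⟩ * h (Stmt15.pj hd t) = _
      by_cases hlt : t.1 ⟨0, by omega⟩ < t.1 ⟨d - 1, by omega⟩
      · rw [Stmt15.rr_last hd t hlt, one_mul]
      · have h0 : h (Stmt15.pj hd t) = 0 := by
          apply hdiag
          rw [Stmt15.pj_zero, Stmt15.pj_one]
          exact le_antisymm (Stmt15.le01 hd t) (not_lt.1 hlt)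
        rw [h0, mul_zero]
  refine ⟨Stmt15.Fhat hd g h hg0 hh0, ?_, hcontF, ?_, ?_, ?_⟩
  · intro t p hp0 hp1 i
    have hp : p = Stmt15.pj hd t := by
      apply Subtype.ext
      funext j
      fin_cases j
      · exact hp0.trans (Stmt15.pj_zero hd t).symm
      · exact hp1.trans (Stmt15.pj_one hd t).symm
    subst hp
    show g (Stmt15.pj hd t) + Stmt15.rr hd t i * h (Stmt15.pj hd t) = _
    split_ifs with hc
    · rw [Stmt15.rr_eq_of_lt hd t hc i]
    · rw [Stmt15.rr_eq_of_not_lt hd t hc i, zero_mul, add_zero]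
  · intro K hK
    have hsub : (Stmt15.Fhat hd g h hg0 hh0) ⁻¹' K ⊆
        Stmt15.pj hd ⁻¹' (f ⁻¹' (Stmt15.pj hd '' K)) := by
      intro t ht
      simp only [Set.mem_preimage]
      rw [← key t]
      exact Set.mem_image_of_mem _ ht
    exact IsCompact.of_isClosed_subset
      (Stmt15.pj_proper hd _ (hfproper _ (hK.image (Stmt15.pj_continuous hd))))
      (hK.isClosed.preimage hcontF) hsub
  · intro t i j _ hval
    show g (Stmt15.pj hd t) + Stmt15.rr hd t i * h (Stmt15.pj hd t)
      = g (Stmt15.pj hd t) + Stmt15.rr hd t j * h (Stmt15.pj hd t)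
    rw [Stmt15.rr_congr hd t hval]
  · intro t ht0
    show g (Stmt15.pj hd t) + Stmt15.rr hd t ⟨0, by omega⟩ * h (Stmt15.pj hd t) = 0
    rw [Stmt15.rr_zero, zero_mul, add_zero, ← (hgh _).1]
    apply hzero
    rw [Stmt15.pj_zero]
    exact ht0
end
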